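/- arXiv:1506.08969 — 10 statements merged into one kernel-verified Lean document; each statement's English description precedes it below -/
import Mathlib

section
/- For infinite cardinals κ < λ, there is no group embedding (injective group homomorphism) of the alternating group Alt(λ) into the symmetric group Sym(κ). -/
/-!
Split `β` into `β` disjoint blocks of size four and place on the `i`-th block two
non-commuting 3-cycles `aᵢ, bᵢ`; then `aᵢ` commutes with `bⱼ` exactly when `i ≠ j`.
An embedding into `Perm α` keeps this pattern. For each `i` pick a point `x` at which the
images of `aᵢ⁻¹` and `bᵢ⁻¹` fail to commute; the record `(x, aᵢ⁻¹ x, bᵢ⁻¹ x, bᵢ⁻¹ aᵢ⁻¹ x)`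
then determines `i`, since equal records for `i ≠ j` together with `Commute aᵢ bⱼ` would make
`aᵢ⁻¹` and `bᵢ⁻¹` commute at `x`. Hence `#β ≤ #(α⁴) = #α`.
-/

open Equiv Cardinal

/-- The alternating group on an arbitrary type `α`: the subgroup of `Equiv.Perm α`
generated by products of two transpositions, i.e. the group of permutations that are
compositions of an even number of transpositions. -/
def altGroup (α : Type*) [DecidableEq α] : Subgroup (Equiv.Perm α) :=
  Subgroup.closure {σ | ∃ τ₁ τ₂ : Equiv.Perm α, τ₁.IsSwap ∧ τ₂.IsSwap ∧ σ = τ₁ * τ₂}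

namespace Equiv.Perm

variable {α β : Type*}

theorem inv_apply_inv_apply_comm_of_commute {a b a' b' : Perm α} {x : α} (h : Commute a b')
    (ha : a⁻¹ x = a'⁻¹ x) (hb : b⁻¹ x = b'⁻¹ x) (hab : b⁻¹ (a⁻¹ x) = b'⁻¹ (a'⁻¹ x)) :
    a⁻¹ (b⁻¹ x) = b⁻¹ (a⁻¹ x) :=
  calc a⁻¹ (b⁻¹ x) = a⁻¹ (b'⁻¹ x) := by rw [hb]
    _ = b'⁻¹ (a⁻¹ x) := congrArg (· x) h.inv_inv.eq
    _ = b'⁻¹ (a'⁻¹ x) := by rw [ha]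
    _ = b⁻¹ (a⁻¹ x) := hab.symm

theorem nonempty_embedding_of_commute_iff_ne {ι : Type*} (a b : ι → Perm α)
    (hab : ∀ i j, Commute (a i) (b j) ↔ i ≠ j) : Nonempty (ι ↪ α × α × α × α) := by
  have hmove : ∀ i, ∃ x, (a i)⁻¹ ((b i)⁻¹ x) ≠ (b i)⁻¹ ((a i)⁻¹ x) := by
    intro i
    by_contra! hfix
    exact (hab i i).1 (Commute.inv_inv_iff.1 (Perm.ext hfix)) rfl
  choose x hx using hmove
  refine ⟨⟨fun i => (x i, (a i)⁻¹ (x i), (b i)⁻¹ (x i), (b i)⁻¹ ((a i)⁻¹ (x i))), ?_⟩⟩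
  intro i j hij
  simp only [Prod.mk.injEq] at hij
  obtain ⟨hx', ha, hb, hab'⟩ := hij
  by_contra hne
  rw [← hx'] at ha hb hab'
  exact hx i (inv_apply_inv_apply_comm_of_commute ((hab i j).2 hne) ha hb hab')

theorem disjoint_viaEmbedding (σ τ : Perm α) {e e' : α ↪ β}
    (h : _root_.Disjoint (Set.range e) (Set.range e')) :
    (σ.viaEmbedding e).Disjoint (τ.viaEmbedding e') := by
  intro z
  by_cases hz : z ∈ Set.range e
  · exact .inr (viaEmbedding_apply_of_notMem _ _ _ (h.notMem_of_mem_left hz))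
  · exact .inl (viaEmbedding_apply_of_notMem _ _ _ hz)

variable [DecidableEq α] [DecidableEq β]

theorem viaEmbedding_swap (e : α ↪ β) (x y : α) :
    (swap x y).viaEmbedding e = swap (e x) (e y) := by
  ext z
  by_cases hz : z ∈ Set.range e
  · obtain ⟨z, rfl⟩ := hz
    rw [viaEmbedding_apply, e.injective.swap_apply]
  · rw [viaEmbedding_apply_of_notMem _ _ _ hz, swap_apply_of_ne_of_ne] <;>
      rintro rfl <;> exact hz ⟨_, rfl⟩

theorem IsSwap.viaEmbedding {σ : Perm α} (hσ : σ.IsSwap) (e : α ↪ β) :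
    (σ.viaEmbedding e).IsSwap := by
  obtain ⟨x, y, hxy, rfl⟩ := hσ
  exact ⟨e x, e y, e.injective.ne hxy, viaEmbedding_swap e x y⟩

end Equiv.Perm

theorem viaEmbedding_mem_altGroup {α β : Type*} [DecidableEq α] [DecidableEq β] {σ : Perm α}
    (hσ : σ ∈ altGroup α) (e : α ↪ β) : σ.viaEmbedding e ∈ altGroup β := by
  suffices altGroup α ≤ (altGroup β).comap (Perm.viaEmbeddingHom e) from this hσ
  refine Subgroup.closure_le _ |>.2 ?_
  rintro _ ⟨τ₁, τ₂, h₁, h₂, rfl⟩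
  exact Subgroup.subset_closure ⟨_, _, h₁.viaEmbedding e, h₂.viaEmbedding e, map_mul _ _ _⟩

theorem exists_altGroup_commute_iff_ne {ι β : Type*} [DecidableEq β] (e : ι × Fin 4 ↪ β) :
    ∃ a b : ι → altGroup β, ∀ i j, Commute (a i) (b j) ↔ i ≠ j := by
  set c : Perm (Fin 4) := swap 0 2 * swap 0 1
  set d : Perm (Fin 4) := swap 0 3 * swap 0 1
  have hc : c ∈ altGroup (Fin 4) := Subgroup.subset_closure
    ⟨_, _, ⟨0, 2, by decide, rfl⟩, ⟨0, 1, by decide, rfl⟩, rfl⟩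
  have hd : d ∈ altGroup (Fin 4) := Subgroup.subset_closure
    ⟨_, _, ⟨0, 3, by decide, rfl⟩, ⟨0, 1, by decide, rfl⟩, rfl⟩
  have hcd : ¬ Commute c d := by unfold Commute SemiconjBy; decide
  let p : ι → Fin 4 ↪ β := fun i => (Function.Embedding.sectR i _).trans e
  refine ⟨fun i => ⟨c.viaEmbedding (p i), viaEmbedding_mem_altGroup hc _⟩,
    fun j => ⟨d.viaEmbedding (p j), viaEmbedding_mem_altGroup hd _⟩, fun i j => ?_⟩
  rw [← commute_map_iff (f := (altGroup β).subtype) Subtype.val_injective]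
  by_cases hij : i = j
  · subst hij
    simpa [← Perm.viaEmbeddingHom_apply, commute_map_iff (Perm.viaEmbeddingHom_injective _)]
      using hcd
  · refine iff_of_true (Perm.disjoint_viaEmbedding c d ?_).commute hij
    rw [Set.disjoint_left]
    rintro _ ⟨k, rfl⟩ ⟨l, hl⟩
    exact hij (congrArg Prod.fst (e.injective hl)).symm

theorem no_embedding_alt_into_sym {α β : Type u} [DecidableEq β]
    [Infinite α] [Infinite β] (h : #α < #β) :
    ¬ ∃ f : altGroup β →* Equiv.Perm α, Function.Injective f := by
  rintro ⟨f, hf⟩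
  have hblocks : #(β × Fin 4) ≤ #β := by
    simpa [mk_prod] using (mul_eq_left (aleph0_le_mk β)
      ((natCast_lt_aleph0 (n := 4)).le.trans (aleph0_le_mk β)) (by simp)).le
  obtain ⟨e⟩ := le_def _ _ |>.1 hblocks
  obtain ⟨a, b, hab⟩ := exists_altGroup_commute_iff_ne e
  obtain ⟨g⟩ := Perm.nonempty_embedding_of_commute_iff_ne (f ∘ a) (f ∘ b)
    fun i j => (commute_map_iff hf).trans (hab i j)
  have hprofile : #(α × α × α × α) = #α := by simp [mk_prod]
  exact (mk_le_of_injective g.injective).trans_eq hprofile |>.not_gt h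
end

section
/- For infinite cardinals κ < λ, there is no group embedding of Sym(λ) into Sym(κ). -/
open Equiv Cardinal

universe u

section Helpers

variable {β : Type u} [DecidableEq β]

theorem swap_pair_mem (τ₁ τ₂ : Equiv.Perm β) (h1 : τ₁.IsSwap) (h2 : τ₂.IsSwap) :
    τ₁ * τ₂ ∈ altGroup β :=
  Subgroup.subset_closure ⟨τ₁, τ₂, h1, h2, rfl⟩

theorem prod_swaps_mem :
    ∀ (l : List (Equiv.Perm β)), (∀ σ ∈ l, σ.IsSwap) → Even l.length → l.prod ∈ altGroup β
  | [], _, _ => by simp [Subgroup.one_mem]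
  | [a], _, he => by simp [Nat.even_add_one] at he
  | (a :: b :: l), h, he => by
      have hp : (a :: b :: l).prod = (a * b) * l.prod := by
        simp [List.prod_cons, mul_assoc]
      rw [hp]
      refine Subgroup.mul_mem _ (swap_pair_mem a b (h a (by simp)) (h b (by simp))) ?_
      refine prod_swaps_mem l (fun σ hσ => h σ (by simp [hσ])) ?_
      simpa [Nat.even_add_one, Classical.not_not] using he

theorem supp_swap (a b : β) : {x | Equiv.swap a b x ≠ x} ⊆ {a, b} := by
  intro z hz
  simp only [Set.mem_setOf_eq] at hz
  by_contra hc
  simp only [Set.mem_insert_iff, Set.mem_singleton_iff, not_or] at hc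
  exact hz (Equiv.swap_apply_of_ne_of_ne hc.1 hc.2)

theorem supp_mul (g h : Equiv.Perm β) :
    {x | (g * h) x ≠ x} ⊆ {x | g x ≠ x} ∪ {x | h x ≠ x} := by
  intro z hz
  by_contra hc
  simp only [Set.mem_union, Set.mem_setOf_eq, not_or, not_not] at hc
  exact hz (by simp [Equiv.Perm.mul_apply, hc.2, hc.1])

theorem altGroup_supp_finite {g : Equiv.Perm β} (hg : g ∈ altGroup β) :
    {x | g x ≠ x}.Finite := by
  induction hg using Subgroup.closure_induction with
  | mem x hx =>
      obtain ⟨τ₁, τ₂, ⟨a, b, _, rfl⟩, ⟨c, d, _, rfl⟩, rfl⟩ := hx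
      refine Set.Finite.subset (Set.Finite.union
        (Set.finite_singleton a |>.insert b) (Set.finite_singleton c |>.insert d)) ?_
      refine (supp_mul _ _).trans (Set.union_subset_union ?_ ?_) <;>
        · refine (supp_swap _ _).trans ?_
          intro z hz; simp at hz; rcases hz with rfl | rfl <;> simp
  | one => simp
  | mul x y hx hy ihx ihy => exact Set.Finite.subset (ihx.union ihy) (supp_mul x y)
  | inv x hx ihx =>
      refine Set.Finite.subset ihx ?_
      intro z hz
      simp only [Set.mem_setOf_eq] at hz ⊢
      intro hc
      exact hz (by nth_rewrite 1 [← hc]; simp)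

theorem viaEmbeddingHom_swap {γ : Type v} [DecidableEq γ] (emb : γ ↪ β) (i j : γ) :
    Equiv.Perm.viaEmbeddingHom emb (Equiv.swap i j) = Equiv.swap (emb i) (emb j) := by
  rw [Equiv.Perm.viaEmbeddingHom_apply]
  ext x
  by_cases hx : x ∈ Set.range emb
  · obtain ⟨y, rfl⟩ := hx
    rw [Equiv.Perm.viaEmbedding_apply, Function.Injective.swap_apply emb.injective]
  · rw [Equiv.Perm.viaEmbedding_apply_of_notMem _ _ _ hx,
      Equiv.swap_apply_of_ne_of_ne (fun hc => hx ⟨i, hc.symm⟩) (fun hc => hx ⟨j, hc.symm⟩)]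

theorem viaEmbeddingHom_mem_altGroup (emb : Fin 5 ↪ β) (γ : Equiv.Perm (Fin 5))
    (hγ : γ ∈ alternatingGroup (Fin 5)) :
    Equiv.Perm.viaEmbeddingHom emb γ ∈ altGroup β := by
  obtain ⟨l, hl, hsw⟩ := (Equiv.Perm.truncSwapFactors γ).out
  have heven : Even l.length := by
    have h1 : Equiv.Perm.sign γ = 1 := Equiv.Perm.mem_alternatingGroup.mp hγ
    rw [← hl, Equiv.Perm.sign_prod_list_swap hsw] at h1
    rwa [neg_one_pow_eq_one_iff_even (by decide)] at h1
  have himg : Equiv.Perm.viaEmbeddingHom emb γ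
      = (l.map (Equiv.Perm.viaEmbeddingHom emb)).prod := by
    rw [← map_list_prod, hl]
  rw [himg]
  refine prod_swaps_mem _ ?_ (by simpa using heven)
  intro σ hσ
  simp only [List.mem_map] at hσ
  obtain ⟨τ, hτ, rfl⟩ := hσ
  obtain ⟨x, y, hxy, rfl⟩ := hsw τ hτ
  rw [viaEmbeddingHom_swap]
  exact ⟨emb x, emb y, emb.injective.ne hxy, rfl⟩

theorem exists_fresh [Infinite β] (s : Set β) (hs : s.Finite) :
    ∃ r : ℕ → β, Function.Injective r ∧ ∀ n, r n ∉ s := by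
  have hi : (sᶜ : Set β).Infinite := hs.infinite_compl
  let e := hi.natEmbedding
  exact ⟨fun n => (e n).1, fun _ _ h => e.injective (Subtype.ext h), fun n => (e n).2⟩

theorem exists_even_map [Infinite β] (s0 s1 s2 s3 t0 t1 t2 t3 : β)
    (hs01 : s0 ≠ s1) (hs02 : s0 ≠ s2) (hs03 : s0 ≠ s3)
    (hs12 : s1 ≠ s2) (hs13 : s1 ≠ s3) (hs23 : s2 ≠ s3)
    (ht01 : t0 ≠ t1) (ht02 : t0 ≠ t2) (ht03 : t0 ≠ t3)
    (ht12 : t1 ≠ t2) (ht13 : t1 ≠ t3) (ht23 : t2 ≠ t3) :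
    ∃ γ : Equiv.Perm β, γ ∈ altGroup β ∧ γ s0 = t0 ∧ γ s1 = t1 ∧ γ s2 = t2 ∧ γ s3 = t3 := by
  obtain ⟨r, hrinj, hr⟩ := exists_fresh
    ({s0, s1, s2, s3, t0, t1, t2, t3} : Set β) (Set.toFinite _)
  have hrs : ∀ n, r n ≠ s0 ∧ r n ≠ s1 ∧ r n ≠ s2 ∧ r n ≠ s3 ∧
      r n ≠ t0 ∧ r n ≠ t1 ∧ r n ≠ t2 ∧ r n ≠ t3 := by
    intro n
    have := hr n
    simp only [Set.mem_insert_iff, Set.mem_singleton_iff, not_or] at this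
    exact ⟨this.1, this.2.1, this.2.2.1, this.2.2.2.1, this.2.2.2.2.1,
      this.2.2.2.2.2.1, this.2.2.2.2.2.2.1, this.2.2.2.2.2.2.2⟩
  have hsymm : ∀ n, s0 ≠ r n ∧ s1 ≠ r n ∧ s2 ≠ r n ∧ s3 ≠ r n ∧
      t0 ≠ r n ∧ t1 ≠ r n ∧ t2 ≠ r n ∧ t3 ≠ r n := by
    intro n
    obtain ⟨a1, a2, a3, a4, a5, a6, a7, a8⟩ := hrs n
    exact ⟨a1.symm, a2.symm, a3.symm, a4.symm, a5.symm, a6.symm, a7.symm, a8.symm⟩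
  have hrr : ∀ m n : ℕ, m ≠ n → r m ≠ r n := fun m n h hc => h (hrinj hc)
  refine ⟨Equiv.swap t0 (r 0) * Equiv.swap t1 (r 1) * Equiv.swap t2 (r 2) * Equiv.swap t3 (r 3) *
      (Equiv.swap s0 (r 0) * Equiv.swap s1 (r 1) * Equiv.swap s2 (r 2) * Equiv.swap s3 (r 3)),
      ?_, ?_, ?_, ?_, ?_⟩
  · have heq : Equiv.swap t0 (r 0) * Equiv.swap t1 (r 1) * Equiv.swap t2 (r 2) *
        Equiv.swap t3 (r 3) *
      (Equiv.swap s0 (r 0) * Equiv.swap s1 (r 1) * Equiv.swap s2 (r 2) * Equiv.swap s3 (r 3))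
      = ([Equiv.swap t0 (r 0), Equiv.swap t1 (r 1), Equiv.swap t2 (r 2), Equiv.swap t3 (r 3),
          Equiv.swap s0 (r 0), Equiv.swap s1 (r 1), Equiv.swap s2 (r 2), Equiv.swap s3 (r 3)] :
          List (Equiv.Perm β)).prod := by
      simp [List.prod_cons, mul_assoc]
    rw [heq]
    refine prod_swaps_mem _ ?_ (by simp; decide)
    intro σ hσ
    simp only [List.mem_cons, List.not_mem_nil, or_false] at hσ
    rcases hσ with rfl|rfl|rfl|rfl|rfl|rfl|rfl|rfl
    exacts [⟨_, _, (hsymm 0).2.2.2.2.1, rfl⟩, ⟨_, _, (hsymm 1).2.2.2.2.2.1, rfl⟩,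
      ⟨_, _, (hsymm 2).2.2.2.2.2.2.1, rfl⟩, ⟨_, _, (hsymm 3).2.2.2.2.2.2.2, rfl⟩,
      ⟨_, _, (hsymm 0).1, rfl⟩, ⟨_, _, (hsymm 1).2.1, rfl⟩,
      ⟨_, _, (hsymm 2).2.2.1, rfl⟩, ⟨_, _, (hsymm 3).2.2.2.1, rfl⟩]
  all_goals
    obtain ⟨b01, b02, b03, b04, b05, b06, b07, b08⟩ := hsymm 0
    obtain ⟨b11, b12, b13, b14, b15, b16, b17, b18⟩ := hsymm 1
    obtain ⟨b21, b22, b23, b24, b25, b26, b27, b28⟩ := hsymm 2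
    obtain ⟨b31, b32, b33, b34, b35, b36, b37, b38⟩ := hsymm 3
    obtain ⟨c01, c02, c03, c04, c05, c06, c07, c08⟩ := hrs 0
    obtain ⟨c11, c12, c13, c14, c15, c16, c17, c18⟩ := hrs 1
    obtain ⟨c21, c22, c23, c24, c25, c26, c27, c28⟩ := hrs 2
    obtain ⟨c31, c32, c33, c34, c35, c36, c37, c38⟩ := hrs 3
    have d01 : r 0 ≠ r 1 := hrr 0 1 (by decide)
    have d02 : r 0 ≠ r 2 := hrr 0 2 (by decide)
    have d03 : r 0 ≠ r 3 := hrr 0 3 (by decide)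
    have d12 : r 1 ≠ r 2 := hrr 1 2 (by decide)
    have d13 : r 1 ≠ r 3 := hrr 1 3 (by decide)
    have d23 : r 2 ≠ r 3 := hrr 2 3 (by decide)
    have d10 := d01.symm; have d20 := d02.symm; have d30 := d03.symm
    have d21 := d12.symm; have d31 := d13.symm; have d32 := d23.symm
    have e01 := hs01.symm; have e02 := hs02.symm; have e03 := hs03.symm
    have e12 := hs12.symm; have e13 := hs13.symm; have e23 := hs23.symm
    have f01 := ht01.symm; have f02 := ht02.symm; have f03 := ht03.symm
    have f12 := ht12.symm; have f13 := ht13.symm; have f23 := ht23.symm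
    simp only [Equiv.Perm.mul_apply]
    simp [Equiv.swap_apply_def, *]

theorem conj_swap (γ : Equiv.Perm β) (x y : β) :
    γ * Equiv.swap x y * γ⁻¹ = Equiv.swap (γ x) (γ y) :=
  (Equiv.swap_apply_apply γ x y).symm

theorem conj_double_swap (γ : Equiv.Perm β) (x y u v : β) :
    γ * (Equiv.swap x y * Equiv.swap u v) * γ⁻¹
      = Equiv.swap (γ x) (γ y) * Equiv.swap (γ u) (γ v) := by
  rw [← conj_swap γ x y, ← conj_swap γ u v]
  group

theorem altGroup_normal_generation [Infinite β]
    (P : Equiv.Perm β → Prop)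
    (Hmul : ∀ x y, P x → P y → P (x * y))
    (Hinv : ∀ x, P x → P x⁻¹)
    (Hconj : ∀ γ x, γ ∈ altGroup β → P x → P (γ * x * γ⁻¹))
    (n : Equiv.Perm β) (hsupp : {x | n x ≠ x}.Finite)
    (hn : P n) (hn1 : n ≠ 1) :
    ∀ t ∈ altGroup β, P t := by
  classical
  -- a point moved by n
  have ⟨a, ha⟩ : ∃ a, n a ≠ a := by
    by_contra hc
    push_neg at hc
    exact hn1 (Equiv.ext fun x => by simp [hc])
  set b := n a with hb
  have hab : a ≠ b := fun h => ha h.symm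
  -- fresh points c d e
  obtain ⟨r, hrinj, hrfresh⟩ := exists_fresh ({x | n x ≠ x} ∪ {a, b}) (hsupp.union (Set.toFinite _))
  have hrfix : ∀ k, n (r k) = r k := by
    intro k; have := hrfresh k; simp only [Set.mem_union, not_or, Set.mem_setOf_eq] at this
    simpa using this.1
  have hrab : ∀ k, r k ≠ a ∧ r k ≠ b := by
    intro k; have := hrfresh k
    simp only [Set.mem_union, not_or, Set.mem_insert_iff, Set.mem_singleton_iff] at this
    exact this.2
  set c := r 0 with hc; set d := r 1 with hd; set e := r 2 with he
  have hca : c ≠ a := (hrab 0).1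
  have hcb : c ≠ b := (hrab 0).2
  have hda : d ≠ a := (hrab 1).1
  have hdb : d ≠ b := (hrab 1).2
  have hea : e ≠ a := (hrab 2).1
  have heb : e ≠ b := (hrab 2).2
  have hcd : c ≠ d := fun h => absurd (hrinj h) (by decide)
  have hce : c ≠ e := fun h => absurd (hrinj h) (by decide)
  have hde : d ≠ e := fun h => absurd (hrinj h) (by decide)
  have hnc : n c = c := hrfix 0
  have hnd : n d = d := hrfix 1
  -- σ and ν
  set σ := Equiv.swap a c * Equiv.swap a d with hσ
  have hσmem : σ ∈ altGroup β :=
    swap_pair_mem _ _ ⟨a, c, hca.symm, rfl⟩ ⟨a, d, hda.symm, rfl⟩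
  have hν : n * σ⁻¹ * n⁻¹ = Equiv.swap b d * Equiv.swap b c := by
    have : σ⁻¹ = Equiv.swap a d * Equiv.swap a c := by
      rw [hσ, mul_inv_rev, Equiv.swap_inv, Equiv.swap_inv]
    rw [this]
    have h2 : n * (Equiv.swap a d * Equiv.swap a c) * n⁻¹
        = Equiv.swap (n a) (n d) * Equiv.swap (n a) (n c) := conj_double_swap n a d a c
    rw [h2, ← hb, hnd, hnc]
  set m := σ * (n * σ⁻¹ * n⁻¹) with hm
  have hmP : P m := by
    have h1 : P (σ * n * σ⁻¹) := Hconj σ n hσmem hn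
    have h2 : P ((σ * n * σ⁻¹) * n⁻¹) := Hmul _ _ h1 (Hinv n hn)
    have : m = (σ * n * σ⁻¹) * n⁻¹ := by rw [hm]; group
    rwa [this]
  have hmeq : m = (Equiv.swap a c * Equiv.swap a d) * (Equiv.swap b d * Equiv.swap b c) := by
    rw [hm, hν, hσ]
  have hma : m a = d := by
    rw [hmeq]
    simp only [Equiv.Perm.mul_apply]
    rw [Equiv.swap_apply_of_ne_of_ne hab (Ne.symm hca),
      Equiv.swap_apply_of_ne_of_ne hab (Ne.symm hda),
      Equiv.swap_apply_left,
      Equiv.swap_apply_of_ne_of_ne hda (Ne.symm hcd)]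
  have hm1 : m ≠ 1 := by
    intro hcon
    rw [hcon] at hma
    simp at hma
    exact hda hma.symm
  -- Fin 5 embedding
  have hemb : Function.Injective (![a, b, c, d, e]) := by
    intro i j hij
    fin_cases i <;> fin_cases j <;>
      simp only [Matrix.cons_val_zero, Matrix.cons_val_one, Matrix.cons_val_two,
        Matrix.cons_val_three, Matrix.cons_val_four, Matrix.head_cons, Matrix.tail_cons,
        Matrix.head_fin_const, Fin.isValue] at hij <;>
      first
        | rfl
        | exact absurd hij hab | exact absurd hij (Ne.symm hab)
        | exact absurd hij (Ne.symm hca) | exact absurd hij hca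
        | exact absurd hij (Ne.symm hcb) | exact absurd hij hcb
        | exact absurd hij (Ne.symm hda) | exact absurd hij hda
        | exact absurd hij (Ne.symm hdb) | exact absurd hij hdb
        | exact absurd hij (Ne.symm hea) | exact absurd hij hea
        | exact absurd hij (Ne.symm heb) | exact absurd hij heb
        | exact absurd hij hcd | exact absurd hij (Ne.symm hcd)
        | exact absurd hij hce | exact absurd hij (Ne.symm hce)
        | exact absurd hij hde | exact absurd hij (Ne.symm hde)
  let emb : Fin 5 ↪ β := ⟨![a, b, c, d, e], hemb⟩
  let Φ : Equiv.Perm (Fin 5) →* Equiv.Perm β := Equiv.Perm.viaEmbeddingHom emb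
  have hΦswap : ∀ i j : Fin 5, Φ (Equiv.swap i j) = Equiv.swap (emb i) (emb j) :=
    fun i j => viaEmbeddingHom_swap emb i j
  set m5 : Equiv.Perm (Fin 5) :=
    (Equiv.swap 0 2 * Equiv.swap 0 3) * (Equiv.swap 1 3 * Equiv.swap 1 2) with hm5
  have hΦm5 : Φ m5 = m := by
    rw [hm5, map_mul, map_mul, map_mul, hΦswap, hΦswap, hΦswap, hΦswap, hmeq]
    rfl
  -- the subgroup of A5 landing in P
  have hP1 : P 1 := by
    have := Hmul m m⁻¹ hmP (Hinv m hmP)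
    rwa [mul_inv_cancel] at this
  let M : Subgroup ↥(alternatingGroup (Fin 5)) :=
    { carrier := {x | P (Φ ↑x)}
      mul_mem' := fun {x y} hx hy => by
        simp only [Set.mem_setOf_eq, Subgroup.coe_mul, map_mul] at *
        exact Hmul _ _ hx hy
      one_mem' := by simpa using hP1
      inv_mem' := fun {x} hx => by
        simp only [Set.mem_setOf_eq, Subgroup.coe_inv, map_inv] at *
        exact Hinv _ hx }
  have hMnormal : M.Normal := by
    constructor
    intro x hx g
    simp only [M, Subgroup.mem_mk, Set.mem_setOf_eq, Subgroup.coe_mul, Subgroup.coe_inv,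
      map_mul, map_inv] at *
    have := Hconj (Φ ↑g) (Φ ↑x) (viaEmbeddingHom_mem_altGroup emb _ g.2) hx
    simpa [mul_assoc] using this
  have hm5sign : m5 ∈ alternatingGroup (Fin 5) := by
    rw [hm5, Equiv.Perm.mem_alternatingGroup]
    simp [Equiv.Perm.sign_swap (show (0:Fin 5) ≠ 2 by decide),
      Equiv.Perm.sign_swap (show (0:Fin 5) ≠ 3 by decide),
      Equiv.Perm.sign_swap (show (1:Fin 5) ≠ 3 by decide),
      Equiv.Perm.sign_swap (show (1:Fin 5) ≠ 2 by decide)]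
  have hm5M : (⟨m5, hm5sign⟩ : ↥(alternatingGroup (Fin 5))) ∈ M := by
    show P (Φ m5)
    rw [hΦm5]; exact hmP
  have hm5ne : (⟨m5, hm5sign⟩ : ↥(alternatingGroup (Fin 5))) ≠ 1 := by
    intro hcon
    apply hm1
    rw [← hΦm5]
    have : m5 = 1 := congrArg Subtype.val hcon
    rw [this, map_one]
  have hMtop : M = ⊤ := by
    rcases alternatingGroup.isSimpleGroup_five.eq_bot_or_eq_top_of_normal M hMnormal with h | h
    · exact absurd (h ▸ hm5M) (by simpa [Subgroup.mem_bot] using hm5ne)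
    · exact h
  have hPA5 : ∀ x : Equiv.Perm (Fin 5), x ∈ alternatingGroup (Fin 5) → P (Φ x) := by
    intro x hx
    have : (⟨x, hx⟩ : ↥(alternatingGroup (Fin 5))) ∈ M := hMtop ▸ Subgroup.mem_top _
    exact this
  -- base cases
  have base3 : P (Equiv.swap a b * Equiv.swap a c) := by
    have := hPA5 (Equiv.swap 0 1 * Equiv.swap 0 2) (by
      rw [Equiv.Perm.mem_alternatingGroup]
      simp [Equiv.Perm.sign_swap (show (0:Fin 5) ≠ 1 by decide),
        Equiv.Perm.sign_swap (show (0:Fin 5) ≠ 2 by decide)])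
    rwa [map_mul, hΦswap, hΦswap] at this
  have base4 : P (Equiv.swap a b * Equiv.swap c d) := by
    have := hPA5 (Equiv.swap 0 1 * Equiv.swap 2 3) (by
      rw [Equiv.Perm.mem_alternatingGroup]
      simp [Equiv.Perm.sign_swap (show (0:Fin 5) ≠ 1 by decide),
        Equiv.Perm.sign_swap (show (2:Fin 5) ≠ 3 by decide)])
    rwa [map_mul, hΦswap, hΦswap] at this
  -- general 3-cycles
  have P3 : ∀ x y z : β, x ≠ y → x ≠ z → y ≠ z → P (Equiv.swap x y * Equiv.swap x z) := by
    intro x y z hxy hxz hyz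
    obtain ⟨r', hr'inj, hr'⟩ := exists_fresh ({x, y, z} : Set β) (Set.toFinite _)
    have hw : ∀ k, r' k ≠ x ∧ r' k ≠ y ∧ r' k ≠ z := by
      intro k; have := hr' k
      simp only [Set.mem_insert_iff, Set.mem_singleton_iff, not_or] at this
      exact this
    obtain ⟨γ, hγmem, hγ1, hγ2, hγ3, hγ4⟩ := exists_even_map a b c d x y z (r' 0)
      hab hca.symm hda.symm hcb.symm hdb.symm hcd
      hxy hxz ((hw 0).1).symm hyz ((hw 0).2.1).symm ((hw 0).2.2).symm
    have := Hconj γ _ hγmem base3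
    rwa [conj_double_swap, hγ1, hγ2, hγ3] at this
  have P4 : ∀ x y u v : β, x ≠ y → x ≠ u → x ≠ v → y ≠ u → y ≠ v → u ≠ v →
      P (Equiv.swap x y * Equiv.swap u v) := by
    intro x y u v h1 h2 h3 h4 h5 h6
    obtain ⟨γ, hγmem, hγ1, hγ2, hγ3, hγ4⟩ := exists_even_map a b c d x y u v
      hab hca.symm hda.symm hcb.symm hdb.symm hcd h1 h2 h3 h4 h5 h6
    have := Hconj γ _ hγmem base4
    rwa [conj_double_swap, hγ1, hγ2, hγ3, hγ4] at this
  -- closure induction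
  intro t ht
  induction ht using Subgroup.closure_induction with
  | mem x hx =>
      obtain ⟨τ₁, τ₂, ⟨x1, y1, hxy1, rfl⟩, ⟨u1, v1, huv1, rfl⟩, rfl⟩ := hx
      by_cases h1 : u1 = x1
      · subst h1
        by_cases h2 : v1 = y1
        · subst h2; simpa using hP1
        · exact P3 u1 y1 v1 hxy1 huv1 (fun hcon => h2 hcon.symm)
      by_cases h3 : u1 = y1
      · subst h3
        by_cases h4 : v1 = x1
        · subst h4
          rw [Equiv.swap_comm u1 v1]
          simpa using hP1
        · rw [Equiv.swap_comm x1 u1]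
          exact P3 u1 x1 v1 (fun hcon => hxy1 hcon.symm) huv1 (fun hcon => h4 hcon.symm)
      by_cases h5 : v1 = x1
      · subst h5
        rw [Equiv.swap_comm u1 v1]
        exact P3 v1 y1 u1 hxy1 (fun hcon => h1 hcon.symm) (fun hcon => h3 hcon.symm)
      by_cases h6 : v1 = y1
      · subst h6
        rw [Equiv.swap_comm x1 v1, Equiv.swap_comm u1 v1]
        exact P3 v1 x1 u1 (fun hcon => hxy1 hcon.symm) (fun hcon => h3 hcon.symm)
          (fun hcon => h1 hcon.symm)
      · exact P4 x1 y1 u1 v1 hxy1 (fun hcon => h1 hcon.symm) (fun hcon => h5 hcon.symm)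
          (fun hcon => h3 hcon.symm) (fun hcon => h6 hcon.symm) huv1
  | one => exact hP1
  | mul x y hx hy ihx ihy => exact Hmul x y ihx ihy
  | inv x hx ihx => exact Hinv x ihx

end Helpers

section Pigeon
theorem exists_three_distinct {S : Type u} (h : ¬ (#S ≤ 2)) :
    ∃ a b c : S, a ≠ b ∧ a ≠ c ∧ b ≠ c := by
  classical
  have h1 : Nontrivial S := by
    rw [← Cardinal.one_lt_iff_nontrivial]
    by_contra hcon
    exact h ((not_lt.mp hcon).trans (by norm_num))
  obtain ⟨a, b, hab⟩ := h1
  by_contra hc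
  push_neg at hc
  apply h
  have hx : ∀ x : S, x = a ∨ x = b := by
    intro x
    by_cases h1 : x = a
    · exact Or.inl h1
    by_cases h2 : x = b
    · exact Or.inr h2
    exact (h2 (hc a b x hab (fun hh => h1 hh.symm)).symm).elim
  have hinj : #S ≤ #(ULift.{u} Bool) := by
    refine Cardinal.mk_le_of_injective (f := fun x : S => ULift.up (decide (x = a))) ?_
    intro x y hxy
    rcases hx x with rfl | rfl <;> rcases hx y with rfl | rfl <;> simp_all
  simpa using hinj

theorem exists_three_eq {X Y : Type u} (F : X → Y) (h : #Y * 2 < #X) :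
    ∃ i j k : X, i ≠ j ∧ i ≠ k ∧ j ≠ k ∧ F i = F j ∧ F i = F k := by
  by_contra hc
  push_neg at hc
  have hfib : ∀ y : Y, #{x // F x = y} ≤ 2 := by
    intro y
    by_contra h2
    obtain ⟨a, b, c, hab, hac, hbc⟩ := exists_three_distinct h2
    exact hc a.1 b.1 c.1 (fun hh => hab (Subtype.ext hh)) (fun hh => hac (Subtype.ext hh))
      (fun hh => hbc (Subtype.ext hh)) (a.2.trans b.2.symm) (a.2.trans c.2.symm)
  have hle : #X ≤ #Y * 2 := by
    calc #X = #(Σ y : Y, {x // F x = y}) := (Cardinal.mk_congr (Equiv.sigmaFiberEquiv F)).symm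
    _ = Cardinal.sum (fun y => #{x // F x = y}) := Cardinal.mk_sigma _
    _ ≤ Cardinal.sum (fun _ : Y => 2) := Cardinal.sum_le_sum _ _ hfib
    _ = #Y * 2 := Cardinal.sum_const' _ _
  exact absurd h (not_lt.mpr hle)

end Pigeon

theorem no_embedding_sym_into_sym {α β : Type u} [DecidableEq β]
    [Infinite α] [Infinite β] (h : #α < #β) :
    ¬ ∃ f : Equiv.Perm β →* Equiv.Perm α, Function.Injective f := by
  classical
  rintro ⟨f, hf⟩
  set ι := (Order.succ (#α)).out with hιdef
  have hι : #ι = Order.succ (#α) := Cardinal.mk_out _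
  have hα : ℵ₀ ≤ #α := Cardinal.aleph0_le_mk α
  have hαι : #α < #ι := by rw [hι]; exact Order.lt_succ _
  have hsucc : ℵ₀ ≤ Order.succ (#α) := hα.trans (Order.le_succ _)
  -- embed the configuration into β
  have hcard : #((ι ⊕ ι) ⊕ ULift.{u} Bool) ≤ #β := by
    have h1 : #((ι ⊕ ι) ⊕ ULift.{u} Bool) = #ι + #ι + 2 := by
      simp [Cardinal.mk_sum, Cardinal.lift_id]
    rw [h1, hι, Cardinal.add_eq_self hsucc,
      Cardinal.add_eq_left hsucc ((by exact_mod_cast (Cardinal.nat_lt_aleph0 2).le : (2:Cardinal) ≤ ℵ₀).trans hsucc)]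
    exact Order.succ_le_of_lt h
  obtain ⟨emb⟩ := (Cardinal.le_def _ _).mp hcard
  set A : ι → β := fun i => emb (Sum.inl (Sum.inl i)) with hAdef
  set Bf : ι → β := fun i => emb (Sum.inl (Sum.inr i)) with hBdef
  set z : β := emb (Sum.inr ⟨false⟩) with hzdef
  set w : β := emb (Sum.inr ⟨true⟩) with hwdef
  have hne : ∀ (x y : (ι ⊕ ι) ⊕ ULift.{u} Bool), x ≠ y → emb x ≠ emb y :=
    fun x y hxy hc => hxy (emb.injective hc)
  have hAinj : ∀ i j : ι, i ≠ j → A i ≠ A j := fun i j hij => hne _ _ (by simp [hij])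
  have hBinj : ∀ i j : ι, i ≠ j → Bf i ≠ Bf j := fun i j hij => hne _ _ (by simp [hij])
  have hABne : ∀ i j : ι, A i ≠ Bf j := fun i j => hne _ _ (by simp)
  have hAz : ∀ i, A i ≠ z := fun i => hne _ _ (by simp)
  have hAw : ∀ i, A i ≠ w := fun i => hne _ _ (by simp)
  have hBz : ∀ i, Bf i ≠ z := fun i => hne _ _ (by simp)
  have hBw : ∀ i, Bf i ≠ w := fun i => hne _ _ (by simp)
  have hzw : z ≠ w := hne _ _ (by simp)
  set v : ι → Equiv.Perm β := fun i => Equiv.swap z (A i) * Equiv.swap w (Bf i) with hvdef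
  have hvmem : ∀ i, v i ∈ altGroup β := fun i =>
    swap_pair_mem _ _ ⟨z, A i, (hAz i).symm, rfl⟩ ⟨w, Bf i, (hBw i).symm, rfl⟩
  have hvv : ∀ i, v i * v i = 1 := by
    intro i
    have hcomm : Commute (Equiv.swap w (Bf i)) (Equiv.swap z (A i)) := by
      apply Equiv.Perm.Disjoint.commute
      intro x
      by_cases h1 : x = w
      · subst h1
        exact Or.inr (Equiv.swap_apply_of_ne_of_ne hzw.symm (hAw i).symm)
      by_cases h2 : x = Bf i
      · subst h2
        exact Or.inr (Equiv.swap_apply_of_ne_of_ne (hBz i) (hABne i i).symm)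
      · exact Or.inl (Equiv.swap_apply_of_ne_of_ne h1 h2)
    rw [hvdef]
    have := Commute.mul_mul_mul_comm hcomm (Equiv.swap z (A i)) (Equiv.swap w (Bf i))
    rw [this]
    simp
  have hvinv : ∀ i, (v i)⁻¹ = v i := fun i => inv_eq_of_mul_eq_one_right (hvv i)
  have hvz : ∀ i, v i z = A i := by
    intro i
    rw [hvdef]
    simp only [Equiv.Perm.mul_apply]
    rw [Equiv.swap_apply_of_ne_of_ne hzw (hBz i).symm, Equiv.swap_apply_left]
  have hvA : ∀ i, v i (A i) = z := by
    intro i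
    rw [hvdef]
    simp only [Equiv.Perm.mul_apply]
    rw [Equiv.swap_apply_of_ne_of_ne (hAw i) (hABne i i), Equiv.swap_apply_right]
  have hvw : ∀ i, v i w = Bf i := by
    intro i
    rw [hvdef]
    simp only [Equiv.Perm.mul_apply]
    rw [Equiv.swap_apply_left, Equiv.swap_apply_of_ne_of_ne (hBz i) (hABne i i).symm]
  have hvB : ∀ i, v i (Bf i) = w := by
    intro i
    rw [hvdef]
    simp only [Equiv.Perm.mul_apply]
    rw [Equiv.swap_apply_right, Equiv.swap_apply_of_ne_of_ne hzw.symm (hAw i).symm]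
  have hvfix : ∀ i x, x ≠ z → x ≠ w → x ≠ A i → x ≠ Bf i → v i x = x := by
    intro i x h1 h2 h3 h4
    rw [hvdef]
    simp only [Equiv.Perm.mul_apply]
    rw [Equiv.swap_apply_of_ne_of_ne h2 h4, Equiv.swap_apply_of_ne_of_ne h1 h3]
  -- the orbit relation
  set Rel : α → α → Prop := fun x y => ∃ g ∈ altGroup β, f g x = y with hReldef
  have hRrefl : ∀ x, Rel x x := fun x => ⟨1, Subgroup.one_mem _, by simp⟩
  have hRtransport : ∀ x y, Rel x y → ∀ g ∈ altGroup β, Rel x (f g y) := by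
    rintro x y ⟨g₀, hg₀, rfl⟩ g hg
    exact ⟨g * g₀, Subgroup.mul_mem _ hg hg₀, by simp⟩
  -- the main claim
  have main : ∀ (x₀ : α) (γ : Equiv.Perm β), γ ∈ altGroup β → f γ x₀ = x₀ := by
    intro x₀
    set P : Equiv.Perm β → Prop := fun g => g ∈ altGroup β ∧ ∀ y, Rel x₀ y → f g y = y
      with hPdef
    have Hmul : ∀ x y, P x → P y → P (x * y) := by
      rintro x y ⟨hx1, hx2⟩ ⟨hy1, hy2⟩
      refine ⟨Subgroup.mul_mem _ hx1 hy1, fun u hu => ?_⟩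
      rw [map_mul, Equiv.Perm.mul_apply, hy2 u hu, hx2 u hu]
    have Hinv : ∀ x, P x → P x⁻¹ := by
      rintro x ⟨hx1, hx2⟩
      refine ⟨Subgroup.inv_mem _ hx1, fun u hu => ?_⟩
      rw [map_inv]
      nth_rewrite 1 [← hx2 u hu]
      simp
    have Hconj : ∀ γ x, γ ∈ altGroup β → P x → P (γ * x * γ⁻¹) := by
      rintro γ x hγ ⟨hx1, hx2⟩
      refine ⟨Subgroup.mul_mem _ (Subgroup.mul_mem _ hγ hx1) (Subgroup.inv_mem _ hγ),
        fun u hu => ?_⟩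
      have hu' : Rel x₀ ((f γ)⁻¹ u) := by
        have := hRtransport x₀ u hu γ⁻¹ (Subgroup.inv_mem _ hγ)
        rwa [map_inv] at this
      simp only [map_mul, map_inv, Equiv.Perm.mul_apply]
      rw [hx2 _ hu']
      simp
    -- choose witnesses for the orbit
    have gsel : ∀ y : {y // Rel x₀ y}, ∃ g, g ∈ altGroup β ∧ f g x₀ = y.1 := by
      rintro ⟨y, g₀, hg₀, hy⟩
      exact ⟨g₀, hg₀, hy⟩
    choose g hg1 hg2 using gsel
    set B : Set β := ⋃ y : {y // Rel x₀ y}, {x | g y x ≠ x} with hBdef2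
    have hBsub : ∀ y, {x | g y x ≠ x} ⊆ B := fun y => by
      rw [hBdef2]
      exact Set.subset_iUnion (fun y : {y // Rel x₀ y} => {x | g y x ≠ x}) y
    have hBcard : #B ≤ #α := by
      refine le_trans (Cardinal.mk_iUnion_le _) ?_
      have h1 : #{y // Rel x₀ y} ≤ #α := Cardinal.mk_subtype_le _
      have h2 : ⨆ y : {y // Rel x₀ y}, #{x | g y x ≠ x} ≤ ℵ₀ := by
        refine ciSup_le' fun y => ?_
        exact (Set.Finite.lt_aleph0 (altGroup_supp_finite (hg1 y))).le
      calc #{y // Rel x₀ y} * ⨆ y : {y // Rel x₀ y}, #{x | g y x ≠ x}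
          ≤ #α * ℵ₀ := mul_le_mul' h1 h2
        _ ≤ #α * #α := mul_le_mul' le_rfl hα
        _ = #α := Cardinal.mul_eq_self hα
    set good : Set ι := {i | A i ∉ B ∧ Bf i ∉ B} with hgooddef
    have hgoodcard : #α * 2 < #good := by
      have h2 : (#α) * 2 = #α := by
        rw [mul_two, Cardinal.add_eq_self hα]
      rw [h2]
      by_contra hcon
      push_neg at hcon
      have hbadA : #{i : ι | A i ∈ B} ≤ #α := by
        refine le_trans ?_ hBcard
        exact Cardinal.mk_le_of_injective (f := fun x : {i : ι | A i ∈ B} =>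
          (⟨A x.1, x.2⟩ : B)) (fun x y hxy => Subtype.ext (by
            by_contra hc
            exact hAinj _ _ hc (congrArg Subtype.val hxy)))
      have hbadB : #{i : ι | Bf i ∈ B} ≤ #α := by
        refine le_trans ?_ hBcard
        exact Cardinal.mk_le_of_injective (f := fun x : {i : ι | Bf i ∈ B} =>
          (⟨Bf x.1, x.2⟩ : B)) (fun x y hxy => Subtype.ext (by
            by_contra hc
            exact hBinj _ _ hc (congrArg Subtype.val hxy)))
      have hcover : (Set.univ : Set ι) ⊆ good ∪ ({i : ι | A i ∈ B} ∪ {i : ι | Bf i ∈ B}) := by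
        intro i _
        by_cases h1 : A i ∈ B
        · exact Or.inr (Or.inl h1)
        by_cases h2 : Bf i ∈ B
        · exact Or.inr (Or.inr h2)
        · exact Or.inl ⟨h1, h2⟩
      have : #ι ≤ #α := by
        calc #ι = #(Set.univ : Set ι) := Cardinal.mk_univ.symm
          _ ≤ #(good ∪ ({i : ι | A i ∈ B} ∪ {i : ι | Bf i ∈ B}) : Set ι) :=
              Cardinal.mk_le_mk_of_subset hcover
          _ ≤ #good + #({i : ι | A i ∈ B} ∪ {i : ι | Bf i ∈ B} : Set ι) :=
              Cardinal.mk_union_le _ _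
          _ ≤ #good + (#{i : ι | A i ∈ B} + #{i : ι | Bf i ∈ B}) :=
              add_le_add le_rfl (Cardinal.mk_union_le _ _)
          _ ≤ #α + (#α + #α) := by
              refine add_le_add hcon (add_le_add hbadA hbadB)
          _ = #α := by rw [Cardinal.add_eq_self hα, Cardinal.add_eq_self hα]
      exact absurd hαι (not_lt.mpr this)
    obtain ⟨i, j, k, hij, hik, hjk, hFij, hFik⟩ :=
      exists_three_eq (fun i : good => f (v i.1) x₀) hgoodcard
    have hij' : i.1 ≠ j.1 := fun hh => hij (Subtype.ext hh)
    have hik' : i.1 ≠ k.1 := fun hh => hik (Subtype.ext hh)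
    have hjk' : j.1 ≠ k.1 := fun hh => hjk (Subtype.ext hh)
    set w₀ : Equiv.Perm β := v i.1 * v k.1 * v j.1 * v i.1 with hw₀def
    -- supp w₀ ⊆ six points
    have hw₀fix : ∀ x : β, x ≠ A i.1 → x ≠ A j.1 → x ≠ A k.1 →
        x ≠ Bf i.1 → x ≠ Bf j.1 → x ≠ Bf k.1 → w₀ x = x := by
      intro x h1 h2 h3 h4 h5 h6
      rw [hw₀def]
      by_cases hx1 : x = z
      · subst hx1
        simp only [Equiv.Perm.mul_apply]
        rw [hvz, hvfix j.1 _ (hAz i.1) (hAw i.1) (fun hh => hAinj _ _ hij' hh) (hABne _ _),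
          hvfix k.1 _ (hAz i.1) (hAw i.1) (fun hh => hAinj _ _ hik' hh) (hABne _ _), hvA]
      by_cases hx2 : x = w
      · subst hx2
        simp only [Equiv.Perm.mul_apply]
        rw [hvw, hvfix j.1 _ (hBz i.1) (hBw i.1) (fun hh => (hABne j.1 i.1) hh.symm)
            (fun hh => hBinj _ _ hij' hh),
          hvfix k.1 _ (hBz i.1) (hBw i.1) (fun hh => (hABne k.1 i.1) hh.symm)
            (fun hh => hBinj _ _ hik' hh), hvB]
      · simp only [Equiv.Perm.mul_apply]
        rw [hvfix i.1 _ hx1 hx2 h1 h4, hvfix j.1 _ hx1 hx2 h2 h5,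
          hvfix k.1 _ hx1 hx2 h3 h6, hvfix i.1 _ hx1 hx2 h1 h4]
    have hw₀Ai : w₀ (A i.1) = A j.1 := by
      rw [hw₀def]
      simp only [Equiv.Perm.mul_apply]
      rw [hvA, hvz,
        hvfix k.1 _ (hAz j.1) (hAw j.1) (fun hh => hAinj _ _ hjk' hh) (hABne _ _),
        hvfix i.1 _ (hAz j.1) (hAw j.1) (fun hh => hAinj _ _ hij' hh.symm) (hABne _ _)]
    have hw₀ne : w₀ ≠ 1 := by
      intro hcon
      have : w₀ (A i.1) = A i.1 := by rw [hcon]; simp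
      rw [hw₀Ai] at this
      exact hAinj _ _ hij' this.symm
    have hw₀mem : w₀ ∈ altGroup β := by
      rw [hw₀def]
      exact Subgroup.mul_mem _ (Subgroup.mul_mem _ (Subgroup.mul_mem _ (hvmem i.1)
        (hvmem k.1)) (hvmem j.1)) (hvmem i.1)
    have hw₀supp : {x | w₀ x ≠ x}.Finite := by
      refine Set.Finite.subset (Set.toFinite
        ({A i.1, A j.1, A k.1, Bf i.1, Bf j.1, Bf k.1} : Set β)) ?_
      intro x hx
      by_contra hc
      simp only [Set.mem_insert_iff, Set.mem_singleton_iff, not_or] at hc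
      obtain ⟨e1, e2, e3, e4, e5, e6⟩ := hc
      exact hx (hw₀fix x e1 e2 e3 e4 e5 e6)
    -- w₀ stabilizes the orbit of x₀ pointwise
    have hstab : ∀ l : ι, f (v l) x₀ = f (v i.1) x₀ → f (v l * v l) x₀ = x₀ := by
      intro l _
      rw [hvv l]
      simp
    have hfix0 : f w₀ x₀ = x₀ := by
      have hq : f (v j.1) (f (v i.1) x₀) = x₀ := by
        have : f (v j.1) (f (v j.1) x₀) = x₀ := by
          rw [← Equiv.Perm.mul_apply, ← map_mul, hvv]; simp
        rw [← hFij] at this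
        simpa using this
      have hq2 : f (v i.1) (f (v k.1) x₀) = x₀ := by
        have : f (v i.1) (f (v i.1) x₀) = x₀ := by
          rw [← Equiv.Perm.mul_apply, ← map_mul, hvv]; simp
        rw [hFik] at this
        simpa using this
      rw [hw₀def]
      simp only [map_mul, Equiv.Perm.mul_apply]
      rw [hq, hq2]
    have hPw₀ : P w₀ := by
      refine ⟨hw₀mem, fun y hy => ?_⟩
      have hgy : f (g ⟨y, hy⟩) x₀ = y := hg2 ⟨y, hy⟩
      have hcomm : Commute w₀ (g ⟨y, hy⟩) := by
        apply Equiv.Perm.Disjoint.commute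
        intro x
        by_cases hx : x = A i.1 ∨ x = A j.1 ∨ x = A k.1 ∨ x = Bf i.1 ∨ x = Bf j.1 ∨ x = Bf k.1
        · right
          by_contra hc
          have hxB : x ∈ B := hBsub ⟨y, hy⟩ hc
          rcases hx with rfl | rfl | rfl | rfl | rfl | rfl
          exacts [i.2.1 hxB, j.2.1 hxB, k.2.1 hxB, i.2.2 hxB, j.2.2 hxB, k.2.2 hxB]
        · push_neg at hx
          exact Or.inl (hw₀fix x hx.1 hx.2.1 hx.2.2.1 hx.2.2.2.1 hx.2.2.2.2.1 hx.2.2.2.2.2)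
      calc f w₀ y = f w₀ (f (g ⟨y, hy⟩) x₀) := by rw [hgy]
        _ = f (w₀ * g ⟨y, hy⟩) x₀ := by simp only [map_mul, Equiv.Perm.mul_apply]
        _ = f (g ⟨y, hy⟩ * w₀) x₀ := by rw [hcomm.eq]
        _ = f (g ⟨y, hy⟩) (f w₀ x₀) := by simp only [map_mul, Equiv.Perm.mul_apply]
        _ = f (g ⟨y, hy⟩) x₀ := by rw [hfix0]
        _ = y := hgy
    have hall : ∀ t ∈ altGroup β, P t :=
      altGroup_normal_generation P Hmul Hinv Hconj w₀ hw₀supp hPw₀ hw₀ne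
    intro γ hγ
    exact (hall γ hγ).2 x₀ (hRrefl x₀)
  -- conclusion
  have hker : ∀ γ, γ ∈ altGroup β → f γ = 1 := by
    intro γ hγ
    ext x
    simpa using main x γ hγ
  obtain ⟨i0⟩ : Nonempty ι := by
    rw [← Cardinal.mk_ne_zero_iff, hι]
    exact ne_of_gt (lt_of_lt_of_le Cardinal.aleph0_pos hsucc)
  have h1 : f (v i0) = f 1 := by rw [hker (v i0) (hvmem i0), map_one]
  have h2 : v i0 = 1 := hf h1
  have h3 : v i0 z = z := by rw [h2]; simp
  rw [hvz] at h3
  exact hAz i0 h3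
end

section
/- For an infinite group G, the following two cardinals are equal: (1) the minimum weight of a Hausdorff linear group topology on G (a group topology with a neighborhood base at the identity consisting of open subgroups); (2) the smallest cardinal κ such that there exist subgroups G_i (i < κ) each of index at most κ in G with ⋂_{i<κ} G_i = {1}. -/
open Cardinal TopologicalSpace

universe u

/-- The weight of a topology: the smallest cardinality of a (topological) base. -/
noncomputable def topWeight {X : Type u} (t : TopologicalSpace X) : Cardinal.{u} :=
  sInf {c | ∃ B : Set (Set X), @TopologicalSpace.IsTopologicalBasis X t B ∧ #B = c}

/-- A topology on a group is a linear group topology if it is a group topology having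
a neighbourhood base at the identity consisting of open subgroups. -/
def IsLinearGroupTopology {G : Type u} [Group G] (t : TopologicalSpace G) : Prop :=
  @IsTopologicalGroup G t _ ∧
    ∀ U ∈ @nhds G t 1, ∃ H : Subgroup G, @IsOpen G t (H : Set G) ∧ (H : Set G) ⊆ U

/-- The minimal weight of a Hausdorff linear group topology on `G`. -/
noncomputable def wl (G : Type u) [Group G] : Cardinal.{u} :=
  sInf {c | ∃ t : TopologicalSpace G, IsLinearGroupTopology t ∧ @T2Space G t ∧ topWeight t = c}

/-!
A faithful action of `G` on a set `X` with `#X ≤ κ`, `κ` infinite, makes `G` a Hausdorff linear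
group in the topology of pointwise convergence on discrete `X`: the basic open subgroups are the
pointwise stabilisers of finite sets, of index at most `κ`, and their cosets form a base of size at
most `κ`. Subgroups `H i` (`i < κ`) of index at most `κ` with trivial intersection give such an
action, on `Σ i, G ⧸ H i`. Conversely, in a Hausdorff linear group topology with a base `B`, each
coset of an open subgroup contains a member of `B`, so open subgroups have index at most `#B`, and
open subgroups inside the basic neighbourhoods of `1` intersect trivially.
-/

open Filter Topology

section Weight

variable {X : Type u} [t : TopologicalSpace X]

lemma topWeight_le_mk {B : Set (Set X)} (hB : IsTopologicalBasis B) : topWeight t ≤ #B :=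
  csInf_le' ⟨B, hB, rfl⟩

lemma exists_isTopologicalBasis_mk_eq_topWeight :
    ∃ B : Set (Set X), IsTopologicalBasis B ∧ #B = topWeight t :=
  csInf_mem (⟨_, _, isTopologicalBasis_opens, rfl⟩ :
    {c | ∃ B : Set (Set X), IsTopologicalBasis B ∧ #B = c}.Nonempty)

lemma TopologicalSpace.IsTopologicalBasis.mk_le_of_surjective {Y : Type u} [TopologicalSpace Y]
    [DiscreteTopology Y] {B : Set (Set X)} (hB : IsTopologicalBasis B) {f : X → Y}
    (hf : Continuous f) (hsurj : Function.Surjective f) : #Y ≤ #B := by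
  have hfiber (y : Y) : ∃ b ∈ B, Function.surjInv hsurj y ∈ b ∧ b ⊆ f ⁻¹' {y} :=
    hB.exists_subset_of_mem_open (by simp [Function.surjInv_eq hsurj])
      ((isOpen_discrete {y}).preimage hf)
  choose b hbB hmem hsub using hfiber
  refine mk_le_of_injective (f := fun y => (⟨b y, hbB y⟩ : B)) fun y₁ y₂ h => ?_
  have : Function.surjInv hsurj y₁ ∈ b y₂ := by
    rw [← show b y₁ = b y₂ from congrArg Subtype.val h]
    exact hmem y₁
  simpa [Function.surjInv_eq hsurj] using hsub y₂ this

end Weight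

lemma QuotientGroup.preimage_mk_singleton_mk {G : Type*} [Group G] (K : Subgroup G) (a : G) :
    QuotientGroup.mk ⁻¹' {(a : G ⧸ K)} = (a * ·) '' (K : Set G) := by
  ext x
  simp only [Set.mem_preimage, Set.mem_singleton_iff, Set.image_mul_left,
    eq_comm (a := (x : G ⧸ K)), QuotientGroup.eq, SetLike.mem_coe]

section OpenSubgroups

variable {G : Type u} [Group G] [t : TopologicalSpace G] [IsTopologicalGroup G]

lemma mk_quotient_le_of_isTopologicalBasis {B : Set (Set G)} (hB : IsTopologicalBasis B)
    {L : Subgroup G} (hL : IsOpen (L : Set G)) : #(G ⧸ L) ≤ #B :=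
  have := QuotientGroup.discreteTopology hL
  hB.mk_le_of_surjective QuotientGroup.continuous_mk QuotientGroup.mk_surjective

lemma topWeight_le_sum_of_hasBasis {β : Type u} {K : β → Subgroup G}
    (hK : (𝓝 (1 : G)).HasBasis (fun _ => True) fun b => (K b : Set G)) :
    topWeight t ≤ sum fun b => #(G ⧸ K b) := by
  let B : Set (Set G) := Set.range fun p : Σ b, G ⧸ K b => QuotientGroup.mk ⁻¹' {p.2}
  have hB : IsTopologicalBasis B := by
    refine isTopologicalBasis_of_isOpen_of_nhds ?_ fun a u ha hu => ?_
    · rintro _ ⟨⟨b, q⟩, rfl⟩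
      have := QuotientGroup.discreteTopology
        (Subgroup.isOpen_of_mem_nhds (K b) (hK.mem_of_mem (i := b) trivial))
      exact (isOpen_discrete {q}).preimage QuotientGroup.continuous_mk
    · have hu' : u ∈ map (a * ·) (𝓝 1) := by
        rw [map_mul_left_nhds_one]
        exact hu.mem_nhds ha
      obtain ⟨b, -, hb⟩ := (hK.map (a * ·)).mem_iff.1 hu'
      exact ⟨_, ⟨⟨b, a⟩, rfl⟩, rfl,
        (QuotientGroup.preimage_mk_singleton_mk (K b) a).trans_subset hb⟩
  calc topWeight t ≤ #B := topWeight_le_mk hB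
    _ ≤ #(Σ b, G ⧸ K b) := mk_range_le
    _ = _ := mk_sigma _

end OpenSubgroups

namespace MulAction

variable (G : Type u) [Group G] (X : Type u) [MulAction G X]

/-- The basis at `1` of the topology of pointwise convergence of `G` acting on discrete `X`. -/
abbrev fixingGroupFilterBasis : GroupFilterBasis G where
  sets := Set.range fun F : Finset X => (fixingSubgroup G (F : Set X) : Set G)
  nonempty := ⟨_, ∅, rfl⟩
  inter_sets := by
    classical
    rintro _ _ ⟨F₁, rfl⟩ ⟨F₂, rfl⟩
    refine ⟨_, ⟨F₁ ∪ F₂, rfl⟩, ?_⟩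
    simp only [Finset.coe_union, fixingSubgroup_union, Subgroup.coe_inf, subset_rfl]
  one' := by
    rintro _ ⟨F, rfl⟩
    exact one_mem _
  mul' := by
    rintro _ ⟨F, rfl⟩
    exact ⟨_, ⟨F, rfl⟩, Set.mul_subset_iff.2 fun a ha b hb => mul_mem ha hb⟩
  inv' := by
    rintro _ ⟨F, rfl⟩
    exact ⟨_, ⟨F, rfl⟩, fun a ha => inv_mem ha⟩
  conj' := by
    classical
    rintro g _ ⟨F, rfl⟩
    refine ⟨_, ⟨F.image (g⁻¹ • ·), rfl⟩, fun a ha => ?_⟩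
    simp only [Finset.coe_image, SetLike.mem_coe, mem_fixingSubgroup_iff, Set.mem_image,
      forall_exists_index, and_imp, forall_apply_eq_imp_iff₂, Set.mem_preimage] at ha ⊢
    intro x hx
    simp [mul_smul, ha x hx]

variable {G X}

lemma fixingGroupFilterBasis_hasBasis :
    (@nhds G (fixingGroupFilterBasis G X).topology 1).HasBasis (fun _ => True)
      fun F : Finset X => (fixingSubgroup G (F : Set X) : Set G) :=
  ⟨fun _ => (fixingGroupFilterBasis G X).nhds_one_hasBasis.mem_iff.trans
    ⟨fun ⟨_, ⟨F, rfl⟩, h⟩ => ⟨F, trivial, h⟩, fun ⟨F, _, h⟩ => ⟨_, ⟨F, rfl⟩, h⟩⟩⟩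

lemma mk_quotient_fixingSubgroup_le (s : Set X) : #(G ⧸ fixingSubgroup G s) ≤ #(s → X) := by
  have hstab : fixingSubgroup G s = stabilizer G (Subtype.val : s → X) := by
    ext g
    simp [mem_fixingSubgroup_iff, funext_iff]
  rw [hstab, ← mk_congr (orbitEquivQuotientStabilizer G _)]
  exact mk_set_le _

lemma isLinearGroupTopology_fixingGroupFilterBasis :
    IsLinearGroupTopology (fixingGroupFilterBasis G X).topology := by
  let _ := (fixingGroupFilterBasis G X).topology
  refine ⟨(fixingGroupFilterBasis G X).isTopologicalGroup, fun U hU => ?_⟩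
  obtain ⟨F, -, hF⟩ := fixingGroupFilterBasis_hasBasis.mem_iff.1 hU
  exact ⟨_, Subgroup.isOpen_of_mem_nhds _ (fixingGroupFilterBasis_hasBasis.mem_of_mem trivial), hF⟩

lemma t2Space_fixingGroupFilterBasis [FaithfulSMul G X] :
    @T2Space G (fixingGroupFilterBasis G X).topology := by
  let _ := (fixingGroupFilterBasis G X).topology
  have := (fixingGroupFilterBasis G X).isTopologicalGroup
  refine IsTopologicalGroup.t2Space_of_one_sep fun g hg => ?_
  obtain ⟨x, hx⟩ : ∃ x : X, g • x ≠ x := by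
    by_contra! h
    exact hg (eq_of_smul_eq_smul fun x => by rw [h x, one_smul])
  refine ⟨_, fixingGroupFilterBasis_hasBasis.mem_of_mem (i := {x}) trivial, ?_⟩
  simpa [mem_fixingSubgroup_iff] using hx

lemma topWeight_fixingGroupFilterBasis_le {κ : Cardinal.{u}} (hκ : ℵ₀ ≤ κ) (hX : #X ≤ κ) :
    topWeight (fixingGroupFilterBasis G X).topology ≤ κ := by
  let _ := (fixingGroupFilterBasis G X).topology
  have := (fixingGroupFilterBasis G X).isTopologicalGroup
  have hfun (F : Finset X) : #(F → X) ≤ κ :=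
    calc #(F → X) = #X ^ (F.card : Cardinal) := by rw [← power_def, mk_coe_finset]
      _ ≤ κ ^ (F.card : Cardinal) := power_le_power_right hX
      _ ≤ κ := power_nat_le hκ
  have hfinset : #(Finset X) ≤ κ := by
    classical
    exact (mk_le_of_surjective List.toFinset_surjective).trans
      ((mk_list_le_max X).trans (max_le hκ hX))
  calc topWeight _ ≤ sum fun F : Finset X => #(G ⧸ fixingSubgroup G (F : Set X)) :=
        topWeight_le_sum_of_hasBasis fixingGroupFilterBasis_hasBasis
    _ ≤ sum fun _ : Finset X => κ :=
        sum_le_sum _ _ fun F => (mk_quotient_fixingSubgroup_le _).trans (hfun F)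
    _ = #(Finset X) * κ := sum_const' _ _
    _ ≤ κ * κ := mul_le_mul_left hfinset κ
    _ = κ := mul_eq_self hκ

lemma wl_le_of_faithfulSMul [FaithfulSMul G X] {κ : Cardinal.{u}} (hκ : ℵ₀ ≤ κ) (hX : #X ≤ κ) :
    wl G ≤ κ :=
  csInf_le_of_le (OrderBot.bddBelow _) ⟨_, isLinearGroupTopology_fixingGroupFilterBasis,
    t2Space_fixingGroupFilterBasis, rfl⟩ (topWeight_fixingGroupFilterBasis_le hκ hX)

end MulAction

lemma Cardinal.exists_surjective_ord_toType {ι : Type u} [Nonempty ι] {κ : Cardinal.{u}}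
    (h : #ι ≤ κ) : ∃ f : κ.ord.ToType → ι, Function.Surjective f := by
  rw [← mk_ord_toType κ] at h
  obtain ⟨e⟩ := h
  exact ⟨Function.invFun e, Function.invFun_surjective e.injective⟩

section SubgroupFamilies

variable {G : Type u} [Group G]

lemma aleph0_le_of_iInf_eq_bot [Infinite G] {ι : Type u} {κ : Cardinal.{u}} {H : ι → Subgroup G}
    (hι : #ι ≤ κ) (hidx : ∀ i, #(G ⧸ H i) ≤ κ) (hbot : ⨅ i, H i = ⊥) : ℵ₀ ≤ κ := by
  by_contra! hκ
  have : Finite ι := lt_aleph0_iff_finite.1 (hι.trans_lt hκ)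
  have (i : ι) : Finite (G ⧸ H i) := lt_aleph0_iff_finite.1 ((hidx i).trans_lt hκ)
  have hfin : Finite (G ⧸ ⨅ i, H i) :=
    Finite.of_injective _ (Subgroup.quotientiInfEmbedding H).injective
  rw [hbot] at hfin
  have : Finite G := Finite.of_equiv _ QuotientGroup.quotientBot.toEquiv
  exact not_finite G

lemma faithfulSMul_sigma_quotient {ι : Type*} {H : ι → Subgroup G} (hbot : ⨅ i, H i = ⊥) :
    FaithfulSMul G (Σ i, G ⧸ H i) := by
  refine ⟨fun {g₁ g₂} h => ?_⟩
  have hmem : g₁⁻¹ * g₂ ∈ ⨅ i, H i := Subgroup.mem_iInf.2 fun i => by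
    have := h ⟨i, (1 : G)⟩
    rw [Sigma.smul_mk, Sigma.smul_mk, Sigma.mk.inj_iff, heq_iff_eq, MulAction.Quotient.smul_mk,
      MulAction.Quotient.smul_mk, smul_eq_mul, smul_eq_mul, mul_one, mul_one,
      QuotientGroup.eq] at this
    exact this.2
  rwa [hbot, Subgroup.mem_bot, inv_mul_eq_one] at hmem

lemma wl_le_of_iInf_eq_bot [Infinite G] {ι : Type u} {κ : Cardinal.{u}} (H : ι → Subgroup G)
    (hι : #ι ≤ κ) (hidx : ∀ i, #(G ⧸ H i) ≤ κ) (hbot : ⨅ i, H i = ⊥) : wl G ≤ κ := by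
  have hκ := aleph0_le_of_iInf_eq_bot hι hidx hbot
  have := faithfulSMul_sigma_quotient hbot
  refine MulAction.wl_le_of_faithfulSMul (X := Σ i, G ⧸ H i) hκ ?_
  calc #(Σ i, G ⧸ H i) = sum fun i => #(G ⧸ H i) := mk_sigma _
    _ ≤ sum fun _ : ι => κ := sum_le_sum _ _ hidx
    _ = #ι * κ := sum_const' _ _
    _ ≤ κ * κ := mul_le_mul_left hι κ
    _ = κ := mul_eq_self hκ

lemma exists_iInf_eq_bot_of_isLinearGroupTopology {t : TopologicalSpace G}
    (hlin : IsLinearGroupTopology t) (ht2 : @T2Space G t) :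
    ∃ H : (topWeight t).ord.ToType → Subgroup G,
      (∀ i, #(G ⧸ H i) ≤ topWeight t) ∧ ⨅ i, H i = ⊥ := by
  have := hlin.1
  obtain ⟨B, hB, hBw⟩ := exists_isTopologicalBasis_mk_eq_topWeight (X := G)
  let ι := {b : B // (1 : G) ∈ b.1}
  choose K hKopen hKsub using fun b : ι => hlin.2 b.1.1 ((hB.isOpen b.1.2).mem_nhds b.2)
  have hKbot : ⨅ b, K b = ⊥ := by
    refine (Subgroup.eq_bot_iff_forall _).2 fun g hg => ?_
    by_contra hg1
    obtain ⟨b, hbB, h1b, hbg⟩ := hB.exists_subset_of_mem_open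
      (Set.mem_compl_singleton_iff.2 (Ne.symm hg1)) isOpen_compl_singleton
    exact hbg (hKsub ⟨⟨b, hbB⟩, h1b⟩ (Subgroup.mem_iInf.1 hg _)) rfl
  have : Nonempty ι := by
    obtain ⟨b, hbB, h1b, -⟩ := hB.exists_subset_of_mem_open (Set.mem_univ (1 : G)) isOpen_univ
    exact ⟨⟨⟨b, hbB⟩, h1b⟩⟩
  obtain ⟨f, hf⟩ := exists_surjective_ord_toType ((mk_subtype_le _).trans hBw.le : #ι ≤ _)
  refine ⟨fun i => K (f i),
    fun i => (mk_quotient_le_of_isTopologicalBasis hB (hKopen _)).trans hBw.le, ?_⟩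
  rw [hf.iInf_comp, hKbot]

end SubgroupFamilies

/-- Algebraic description of the linear weight: for an infinite group `G`, the minimal weight
of a Hausdorff linear group topology on `G` equals the smallest cardinal `κ` for which there
are subgroups `G i` (`i < κ`) of index at most `κ` with trivial intersection. -/
theorem wl_eq_subgroup_cover_number (G : Type u) [Group G] [Infinite G] :
    wl G = sInf {κ : Cardinal.{u} | ∃ H : κ.ord.ToType → Subgroup G,
      (∀ i, #(G ⧸ H i) ≤ κ) ∧ (⨅ i, H i) = ⊥} := by
  set W := {c | ∃ t : TopologicalSpace G, IsLinearGroupTopology t ∧ @T2Space G t ∧ topWeight t = c}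
  set S := {κ : Cardinal.{u} | ∃ H : κ.ord.ToType → Subgroup G,
      (∀ i, #(G ⧸ H i) ≤ κ) ∧ (⨅ i, H i) = ⊥}
  have hW : W.Nonempty := ⟨_, _, MulAction.isLinearGroupTopology_fixingGroupFilterBasis (X := G),
    MulAction.t2Space_fixingGroupFilterBasis, rfl⟩
  have hWS : W ⊆ S := by
    rintro _ ⟨t, hlin, ht2, rfl⟩
    exact exists_iInf_eq_bot_of_isLinearGroupTopology hlin ht2
  apply le_antisymm
  · refine le_csInf (hW.mono hWS) ?_
    rintro κ ⟨H, hidx, hbot⟩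
    exact wl_le_of_iInf_eq_bot H (mk_ord_toType κ).le hidx hbot
  · exact csInf_le_csInf (OrderBot.bddBelow _) hW hWS
end

section
/- If a group G admits subgroups G_i (i < κ) each of index at most κ with trivial intersection, then G admits a Hausdorff group topology (in fact a linear one) with a base of cardinality at most κ, where κ is an infinite cardinal. -/
/-!
Let `G` act on `X = Σ i, G ⧸ G i`. The fixing subgroups of finite subsets of `X` are exactly the
finite intersections of conjugates of the `G i`, and they form a group filter basis. Its topology is
that of pointwise convergence on the discrete set `X`: it is linear, Hausdorff because the action is
faithful (this is `⨅ i, G i = ⊥`), and has as a basis the sets `{g | g • x₁ = y₁, …, g • xₙ = yₙ}`,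
indexed by the finite subsets of `X × X`, of which there are at most `κ`.
-/

open Cardinal TopologicalSpace

universe u

theorem Cardinal.mk_finset_le_max (α : Type*) : #(Finset α) ≤ max ℵ₀ #α := by
  classical
  exact (mk_le_of_surjective List.toFinset_surjective).trans (mk_list_le_max α)

theorem GroupFilterBasis.isLinearGroupTopology {G : Type u} [Group G] (B : GroupFilterBasis G)
    (hB : ∀ U ∈ B, ∃ K : Subgroup G, (K : Set G) = U) : IsLinearGroupTopology B.topology := by
  let _ := B.topology
  refine ⟨B.isTopologicalGroup, fun U hU => ?_⟩
  obtain ⟨V, hV, hVU⟩ := B.nhds_one_hasBasis.mem_iff.mp hU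
  obtain ⟨K, rfl⟩ := hB V hV
  exact ⟨K, K.isOpen_of_mem_nhds (B.mem_nhds_one hV), hVU⟩

namespace MulAction

variable (G X : Type*) [Group G] [MulAction G X]

abbrev fixingSubgroupFilterBasis : GroupFilterBasis G where
  sets := Set.range fun s : Finset X => (fixingSubgroup G (s : Set X) : Set G)
  nonempty := Set.range_nonempty _
  inter_sets := by
    classical
    rintro _ _ ⟨s, rfl⟩ ⟨t, rfl⟩
    exact ⟨_, ⟨s ∪ t, rfl⟩, by simp [fixingSubgroup_union]⟩
  one' := by
    rintro _ ⟨s, rfl⟩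
    exact one_mem _
  mul' := by
    rintro _ ⟨s, rfl⟩
    exact ⟨_, ⟨s, rfl⟩, Set.mul_subset_iff.2 fun _ ha _ hb => mul_mem ha hb⟩
  inv' := by
    rintro _ ⟨s, rfl⟩
    exact ⟨_, ⟨s, rfl⟩, fun _ ha => inv_mem ha⟩
  conj' := by
    classical
    rintro g _ ⟨s, rfl⟩
    refine ⟨_, ⟨s.image (g⁻¹ • ·), rfl⟩, fun h hh => ?_⟩
    simp only [Set.mem_preimage, SetLike.mem_coe, mem_fixingSubgroup_iff, Finset.coe_image,
      Set.mem_image, forall_exists_index, and_imp, forall_apply_eq_imp_iff₂] at hh ⊢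
    intro x hx
    rw [mul_smul, mul_smul, hh x hx, smul_inv_smul]

theorem isLinearGroupTopology_fixingSubgroupFilterBasis :
    IsLinearGroupTopology (fixingSubgroupFilterBasis G X).topology :=
  GroupFilterBasis.isLinearGroupTopology _ fun _ ⟨_, hs⟩ => ⟨_, hs⟩

theorem isOpen_setOf_smul_eq (x y : X) :
    @IsOpen G (fixingSubgroupFilterBasis G X).topology {g | g • x = y} := by
  let _ := (fixingSubgroupFilterBasis G X).topology
  refine isOpen_iff_mem_nhds.2 fun g hg => ?_
  refine ((fixingSubgroupFilterBasis G X).nhds_hasBasis g).mem_iff.2 ⟨_, ⟨{x}, rfl⟩, ?_⟩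
  rintro _ ⟨k, hk, rfl⟩
  rw [Set.mem_ofPred_eq, mul_smul, (mem_fixingSubgroup_iff G).1 hk x (by simp), hg]

theorem isTopologicalBasis_fixingSubgroupFilterBasis :
    @IsTopologicalBasis G (fixingSubgroupFilterBasis G X).topology
      (Set.range fun F : Finset (X × X) => {g : G | ∀ p ∈ F, g • p.1 = p.2}) := by
  let _ := (fixingSubgroupFilterBasis G X).topology
  classical
  refine isTopologicalBasis_of_isOpen_of_nhds ?_ fun g U hg hU => ?_
  · rintro _ ⟨F, rfl⟩
    simp_rw [Set.ofPred_forall]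
    exact isOpen_biInter_finset fun p _ => isOpen_setOf_smul_eq G X p.1 p.2
  obtain ⟨_, ⟨s, rfl⟩, hsU⟩ :=
    ((fixingSubgroupFilterBasis G X).nhds_hasBasis g).mem_iff.1 (hU.mem_nhds hg)
  refine ⟨_, ⟨s.image fun x => (x, g • x), rfl⟩, by simp, fun h hh => hsU ⟨g⁻¹ * h, ?_, by simp⟩⟩
  simp only [Finset.mem_image, forall_exists_index, and_imp, Set.mem_ofPred_eq] at hh
  exact (mem_fixingSubgroup_iff G).2 fun x hx => by
    rw [mul_smul, hh _ x (Finset.mem_coe.1 hx) rfl, inv_smul_smul]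

theorem t2Space_fixingSubgroupFilterBasis [FaithfulSMul G X] :
    @T2Space G (fixingSubgroupFilterBasis G X).topology := by
  let _ := (fixingSubgroupFilterBasis G X).topology
  have := (fixingSubgroupFilterBasis G X).isTopologicalGroup
  refine IsTopologicalGroup.t2Space_of_one_sep fun g hg => ?_
  obtain ⟨x, hx⟩ : ∃ x : X, g • x ≠ x := by
    by_contra! h
    exact hg (eq_of_smul_eq_smul fun x => by rw [h, one_smul])
  exact ⟨_, (fixingSubgroupFilterBasis G X).mem_nhds_one ⟨{x}, rfl⟩,
    by simpa [mem_fixingSubgroup_iff] using hx⟩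

theorem faithfulSMul_sigma_quotient_of_iInf_eq_bot {ι : Type*} {H : ι → Subgroup G}
    (h : ⨅ i, H i = ⊥) :
    FaithfulSMul G (Σ i, G ⧸ H i) where
  eq_of_smul_eq_smul {g₁ g₂} hg := by
    have : g₁⁻¹ * g₂ ∈ ⨅ i, H i := Subgroup.mem_iInf.2 fun i => by
      simpa [Sigma.smul_mk, QuotientGroup.eq] using hg ⟨i, ((1 : G) : G ⧸ H i)⟩
    rwa [h, Subgroup.mem_bot, inv_mul_eq_one] at this

end MulAction

open MulAction

/-- If a group `G` admits subgroups `G i` (`i < κ`), each of index at most `κ`, with trivial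
intersection (`κ` an infinite cardinal), then `G` admits a Hausdorff linear group topology
with a base of cardinality at most `κ`. -/
theorem exists_linear_topology_of_subgroups (G : Type u) [Group G] (κ : Cardinal.{u})
    (hκ : ℵ₀ ≤ κ) (H : κ.ord.ToType → Subgroup G)
    (hind : ∀ i, #(G ⧸ H i) ≤ κ) (hinter : (⨅ i, H i) = ⊥) :
    ∃ t : TopologicalSpace G, IsLinearGroupTopology t ∧ @T2Space G t ∧
      ∃ B : Set (Set G), @TopologicalSpace.IsTopologicalBasis G t B ∧ #B ≤ κ := by
  let X := Σ i, G ⧸ H i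
  have : FaithfulSMul G X := faithfulSMul_sigma_quotient_of_iInf_eq_bot G hinter
  have hX : #X ≤ κ := calc
    #X = sum fun i => #(G ⧸ H i) := mk_sigma _
    _ ≤ sum fun _ : κ.ord.ToType => κ := sum_le_sum _ _ hind
    _ = κ := by rw [sum_const', mk_ord_toType, mul_eq_self hκ]
  refine ⟨_, isLinearGroupTopology_fixingSubgroupFilterBasis G X,
    t2Space_fixingSubgroupFilterBasis G X, _, isTopologicalBasis_fixingSubgroupFilterBasis G X, ?_⟩
  calc _ ≤ #(Finset (X × X)) := mk_range_le
    _ ≤ max ℵ₀ #(X × X) := mk_finset_le_max _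
    _ ≤ κ := max_le hκ <| by simpa only [mk_prod, lift_id, mul_eq_self hκ] using mul_le_mul' hX hX
end

section
/- For any infinite cardinal κ and any infinite cardinal λ < κ, the alternating group Alt(κ) does not satisfy the weak λ⁺-compatibility condition; hence cn(Alt(κ)) ≥ κ. -/
open Cardinal Equiv

universe u

/-- A group `G` satisfies the weak `μ`-compatibility condition if for any finite group `F`
and any family of isomorphisms `f i : F ≃* F i` (`i < μ`) onto finite subgroups of `G`,
there are indices `i < j < μ` and a homomorphism `φ` from the subgroup generated by
`F i ∪ F j` to `F` such that `φ ∘ f i = φ ∘ f j = id`. -/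
def WeakCompat (G : Type u) [Group G] (μ : Cardinal.{u}) : Prop :=
  ∀ (F : Type) (_ : Group F) (_ : Finite F)
    (Fs : ∀ o : Ordinal.{u}, o < μ.ord → Subgroup G)
    (f : ∀ o ho, F ≃* Fs o ho),
    ∃ (i j : Ordinal.{u}) (hi : i < μ.ord) (hj : j < μ.ord), i < j ∧
      ∃ φ : (Fs i hi ⊔ Fs j hj : Subgroup G) →* F,
        (∀ x, φ (Subgroup.inclusion le_sup_left (f i hi x)) = x) ∧
        (∀ x, φ (Subgroup.inclusion le_sup_right (f j hj x)) = x)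

/-- The weak compatibility number of `G`: the smallest infinite cardinal `κ` such that `G`
satisfies the weak `κ⁺`-compatibility condition. -/
noncomputable def cn (G : Type u) [Group G] : Cardinal.{u} :=
  sInf {κ | ℵ₀ ≤ κ ∧ WeakCompat G (Order.succ κ)}

/-! Fix distinct `x, y : α`. The 3-cycles `c a = (x y)(x a)`, `a ∉ {x, y}`, have order 3, and
for `a ≠ b` the product `c a * c b = (y a)(x b)` is an involution. Index `λ⁺ ≤ #α` of them and
identify `ZMod 3` with each `⟨c a⟩` by `1 ↦ c a`: a homomorphism `φ` as in weak compatibility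
would send the involution `c a * c b` to `g ^ 2` with `g` of order 3, which is impossible.

The set defining `cn G` is nonempty, so that its infimum is not the junk value `0`: among more
than `#(ℕ → G)` embeddings of a finite (hence countable) group into `G`, two agree pointwise, and
then the inverse of either one is the required homomorphism. -/

section OrdinalIndexed

variable {μ : Cardinal.{u}}

theorem exists_injective_ord_indexed {ι : Type u} (h : μ ≤ #ι) :
    ∃ a : ∀ o, o < μ.ord → ι, ∀ o ho o' ho', a o ho = a o' ho' → o = o' := by
  rw [← mk_ord_toType μ] at h
  obtain ⟨E⟩ := h
  exact ⟨fun o ho => E (Ordinal.ToType.mk ⟨o, ho⟩), fun o ho o' ho' h =>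
    congrArg Subtype.val (Ordinal.ToType.mk.injective (E.injective h))⟩

theorem exists_lt_ord_indexed_eq_of_mk_lt {β : Type u} (h : #β < μ) (a : ∀ o, o < μ.ord → β) :
    ∃ (i j : Ordinal.{u}) (hi : i < μ.ord) (hj : j < μ.ord), i < j ∧ a i hi = a j hj := by
  let b : μ.ord.ToType → β := fun t => a (Ordinal.ToType.mk.symm t) (Ordinal.ToType.mk.symm t).2
  have hb : ¬ b.Injective := fun hinj =>
    (mk_le_of_injective hinj).not_gt (by rwa [mk_ord_toType])
  obtain ⟨t₁, t₂, heq, hne⟩ := Function.not_injective_iff.mp hb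
  have hne : (Ordinal.ToType.mk.symm t₁ : Ordinal) ≠ Ordinal.ToType.mk.symm t₂ := fun h =>
    hne (Ordinal.ToType.mk.symm.injective (Subtype.ext h))
  rcases hne.lt_or_gt with hlt | hlt
  · exact ⟨_, _, _, _, hlt, heq⟩
  · exact ⟨_, _, _, _, hlt, heq.symm⟩

end OrdinalIndexed

section Group

variable {G : Type*} [Group G]

noncomputable def zpowersMulEquivZMod (g : G) {n : ℕ} (hg : orderOf g = n) :
    Multiplicative (ZMod n) ≃* Subgroup.zpowers g :=
  zmodMulEquivOfGenerator (g := (⟨g, Subgroup.mem_zpowers g⟩ : Subgroup.zpowers g))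
    (fun ⟨_, k, hk⟩ => ⟨k, Subtype.ext hk⟩) ((Nat.card_zpowers g).trans hg)

@[simp]
theorem zpowersMulEquivZMod_ofAdd_one (g : G) {n : ℕ} (hg : orderOf g = n) :
    (zpowersMulEquivZMod g hg (Multiplicative.ofAdd 1) : G) = g := by
  simp [zpowersMulEquivZMod]

theorem exists_retraction_sup_of_coe_eq {F : Type*} [Group F] {H K : Subgroup G}
    (f : F ≃* H) (f' : F ≃* K) (h : ∀ x, (f x : G) = f' x) :
    ∃ φ : (H ⊔ K : Subgroup G) →* F,
      (∀ x, φ (Subgroup.inclusion le_sup_left (f x)) = x) ∧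
      (∀ x, φ (Subgroup.inclusion le_sup_right (f' x)) = x) := by
  have hKH : K ≤ H := fun k hk => by
    simpa [h] using (f (f'.symm ⟨k, hk⟩)).2
  refine ⟨f.symm.toMonoidHom.comp (Subgroup.inclusion (sup_le le_rfl hKH)),
    fun x => ?_, fun x => ?_⟩
  · have : Subgroup.inclusion (sup_le le_rfl hKH) (Subgroup.inclusion le_sup_left (f x)) =
        f x := rfl
    simp [this]
  · have : Subgroup.inclusion (sup_le le_rfl hKH) (Subgroup.inclusion le_sup_right (f' x)) =
        f x := Subtype.ext (h x).symm
    simp [this]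

end Group

theorem weakCompat_of_mk_lt {G : Type u} [Group G] {μ : Cardinal.{u}} (h : #(ℕ → G) < μ) :
    WeakCompat G μ := by
  intro F _ _ Fs f
  obtain ⟨e, he⟩ := exists_injective_nat F
  have hcode : Function.Injective fun φ : F → G => φ ∘ Function.invFun e :=
    (Function.invFun_surjective he).injective_comp_right
  obtain ⟨i, j, hi, hj, hij, hcoll⟩ :=
    exists_lt_ord_indexed_eq_of_mk_lt h fun o ho => (fun x => (f o ho x : G)) ∘ Function.invFun e
  exact ⟨i, j, hi, hj, hij, exists_retraction_sup_of_coe_eq _ _ (congrFun (hcode hcoll))⟩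

theorem le_cn_of_forall_not_weakCompat {G : Type u} [Group G] {κ : Cardinal.{u}}
    (h : ∀ lam, ℵ₀ ≤ lam → lam < κ → ¬ WeakCompat G (Order.succ lam)) : κ ≤ cn G :=
  le_csInf ⟨max ℵ₀ #(ℕ → G), le_max_left _ _,
      weakCompat_of_mk_lt ((le_max_right _ _).trans_lt (Order.lt_succ _))⟩
    fun lam hlam => not_lt.1 fun hlt => h lam hlam.1 hlt hlam.2

theorem not_weakCompat_of_orderOf_eq_three {G ι : Type u} [Group G] {μ : Cardinal.{u}}
    (c : ι → G) (hc : ∀ i, orderOf (c i) = 3) (hcc : Pairwise fun i j => (c i * c j) ^ 2 = 1)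
    (hμ : μ ≤ #ι) : ¬ WeakCompat G μ := by
  intro hWC
  obtain ⟨a, ha⟩ := exists_injective_ord_indexed hμ
  let f o ho := zpowersMulEquivZMod (c (a o ho)) (hc _)
  obtain ⟨i, j, hi, hj, hij, φ, hφi, hφj⟩ := hWC _ inferInstance inferInstance _ f
  let g : Multiplicative (ZMod 3) := .ofAdd 1
  have hinv : (Subgroup.inclusion le_sup_left (f i hi g) *
      Subgroup.inclusion le_sup_right (f j hj g)) ^ 2 = 1 :=
    Subtype.ext (by simpa [f, g] using hcc fun h => hij.ne (ha _ _ _ _ h))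
  have := congrArg φ hinv
  rw [map_pow, map_mul, hφi, hφj, map_one] at this
  exact absurd this (by decide)

section Swap

variable {α : Type*} [DecidableEq α] {x y a b : α}

theorem swap_mul_swap_mul_swap_same (hxa : x ≠ a) (hya : y ≠ a) :
    swap x y * swap x a * swap x y = swap y a := by
  rw [swap_comm x a, swap_mul_swap_mul_swap hxa.symm hya.symm]

theorem orderOf_swap_mul_swap_same (hxy : x ≠ y) (hxa : x ≠ a) (hya : y ≠ a) :
    orderOf (swap x y * swap x a) = 3 := by
  refine orderOf_eq_prime ?_ fun h => hya ?_
  · calc (swap x y * swap x a) ^ 3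
          = (swap x y * swap x a * swap x y) * (swap x a * swap x y * swap x a) := by
            simp only [pow_succ, pow_zero, one_mul, mul_assoc]
      _ = 1 := by
        rw [swap_mul_swap_mul_swap_same hxa hya, swap_mul_swap_mul_swap_same hxy hya.symm,
          swap_comm a y, swap_mul_self]
  · simpa [swap_apply_of_ne_of_ne] using Perm.ext_iff.1 h a

theorem swap_mul_swap_mul_swap_mul_swap_sq (hxy : x ≠ y) (hxa : x ≠ a) (hxb : x ≠ b)
    (hya : y ≠ a) (hyb : y ≠ b) (hab : a ≠ b) :
    (swap x y * swap x a * (swap x y * swap x b)) ^ 2 = 1 := by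
  have hdisj : (swap y a).Disjoint (swap x b) :=
    Perm.disjoint_swap_swap (by simp [*, Ne.symm hxy, Ne.symm hxa])
  rw [← mul_assoc, swap_mul_swap_mul_swap_same hxa hya, hdisj.commute.mul_pow, sq, sq,
    swap_mul_self, swap_mul_self, one_mul]

theorem swap_mul_swap_mem_altGroup (hxy : x ≠ y) (hxa : x ≠ a) :
    swap x y * swap x a ∈ altGroup α :=
  Subgroup.subset_closure ⟨_, _, ⟨x, y, hxy, rfl⟩, ⟨x, a, hxa, rfl⟩, rfl⟩

end Swap

theorem altGroup_not_weakCompat {α : Type u} [DecidableEq α] [Infinite α] {μ : Cardinal.{u}}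
    (hμ : μ ≤ #α) : ¬ WeakCompat (altGroup α) μ := by
  obtain ⟨x, y, hxy⟩ := exists_pair_ne α
  have hmem (a : ↥({x, y} : Set α)ᶜ) : x ≠ a ∧ y ≠ a :=
    ⟨fun h => a.2 (by simp [← h]), fun h => a.2 (by simp [← h])⟩
  refine not_weakCompat_of_orderOf_eq_three
    (fun a => ⟨_, swap_mul_swap_mem_altGroup hxy (hmem a).1⟩) (fun a => ?_) (fun a b hab => ?_)
    (hμ.trans (mk_compl_of_infinite {x, y}
      ((Set.toFinite _).lt_aleph0.trans_le (aleph0_le_mk α))).ge)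
  · rw [Subgroup.orderOf_mk]
    exact orderOf_swap_mul_swap_same hxy (hmem a).1 (hmem a).2
  · exact Subtype.ext (swap_mul_swap_mul_swap_mul_swap_sq hxy (hmem a).1 (hmem b).1 (hmem a).2
      (hmem b).2 (Subtype.coe_ne_coe.2 hab))

/-- For any infinite cardinal `κ = #α` and any infinite cardinal `λ < κ`, the alternating
group `Alt(α)` does not satisfy the weak `λ⁺`-compatibility condition; hence
`cn (Alt(α)) ≥ #α`. -/
theorem alt_not_weakCompat (α : Type u) [DecidableEq α] [Infinite α] :
    (∀ lam : Cardinal.{u}, ℵ₀ ≤ lam → lam < #α →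
      ¬ WeakCompat (altGroup α) (Order.succ lam)) ∧
    #α ≤ cn (altGroup α) := by
  have h : ∀ lam : Cardinal.{u}, ℵ₀ ≤ lam → lam < #α →
      ¬ WeakCompat (altGroup α) (Order.succ lam) :=
    fun _ _ hlt => altGroup_not_weakCompat (Order.succ_le_of_lt hlt)
  exact ⟨h, le_cn_of_forall_not_weakCompat h⟩
end

section
/- If A and B are 4-element subsets of a set X with |A ∩ B| = 3, then the subgroup of Sym(X) generated by Alt(A) ∪ Alt(B) equals Alt(A ∪ B), which is isomorphic to the alternating group on 5 elements. -/
open Equiv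

universe u

/-- The subgroup of permutations of `X` supported on the set `S`
(i.e. fixing every point outside `S`). -/
def fixingOutside {X : Type u} (S : Set X) : Subgroup (Equiv.Perm X) where
  carrier := {f | ∀ x ∉ S, f x = x}
  one_mem' := fun x _ => rfl
  mul_mem' := by
    intro f g hf hg x hx
    simp only [Set.mem_setOf_eq] at *
    rw [Equiv.Perm.mul_apply, hg x hx, hf x hx]
  inv_mem' := by
    intro f hf x hx
    simp only [Set.mem_setOf_eq] at *
    have := hf x hx
    conv_lhs => rw [← this]
    exact f.symm_apply_apply x

/-- `AltOn S` is the group of even permutations of `X` supported on `S`. -/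
def AltOn {X : Type u} [DecidableEq X] (S : Set X) : Subgroup (Equiv.Perm X) :=
  altGroup X ⊓ fixingOutside S

/-!
Every element of `Alt(A ∪ B)` fixing the point `b` of `B \ A` lies in `Alt(A)`, so the group
generated by `Alt(A)` and `Alt(B)` is all of `Alt(A ∪ B)` as soon as it moves `b` to every point
of `A ∪ B`; a point of `A ∩ B` serves as a stepping stone from `B` to `A`. For the isomorphism,
a product of double transpositions that fixes everything outside a finite set `S` is an even
permutation of `S`: it is a product of double transpositions supported on some finite `T ⊇ S`,
and its signs on `S` and on `T` agree.
-/

open Equiv Equiv.Perm Subgroup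

theorem le_of_inf_stabilizer_le {G α : Type*} [Group G] [MulAction G α] {H K : Subgroup G}
    {b : α} (hHK : H ≤ K) (hstab : K ⊓ MulAction.stabilizer G b ≤ H)
    (horbit : ∀ k ∈ K, ∃ h ∈ H, h • b = k • b) : K ≤ H := by
  intro k hk
  obtain ⟨h, hh, hhb⟩ := horbit k hk
  have : h⁻¹ * k ∈ H := hstab <| mem_inf.2 ⟨mul_mem (inv_mem (hHK hh)) hk, by
    rw [MulAction.mem_stabilizer_iff, mul_smul, ← hhb, inv_smul_smul]⟩
  simpa using mul_mem hh this

theorem altGroup_eq_alternatingGroup (α : Type*) [Fintype α] [DecidableEq α] :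
    altGroup α = alternatingGroup α := by
  refine le_antisymm ((closure_le _).2 ?_) ?_
  · rintro _ ⟨τ₁, τ₂, h₁, h₂, rfl⟩
    exact mul_mem_alternatingGroup_of_isSwap h₁ h₂
  · rw [← closure_three_cycles_eq_alternating, closure_le]
    intro g hg
    obtain ⟨a, ha⟩ := Finset.card_pos.1 (hg.card_support ▸ three_pos)
    have hga : a ≠ g a := (mem_support.1 ha).symm
    rw [(hg.eq_swap_mul_swap_iff_mem_support (a := a)).2 ha]
    exact subset_closure ⟨_, _, ⟨_, _, hga, rfl⟩, ⟨_, _, g.injective.ne hga, rfl⟩, rfl⟩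

section

variable {X : Type u}

theorem apply_mem_iff_of_mem_fixingOutside {S : Set X} {g : Perm X} (hg : g ∈ fixingOutside S)
    (x : X) : g x ∈ S ↔ x ∈ S := by
  by_cases hx : x ∈ S
  · refine iff_of_true ?_ hx
    by_contra hgx
    exact hgx (by rwa [g.injective (hg _ hgx)])
  · rw [hg x hx]

variable [DecidableEq X]

theorem altOn_mono {S T : Set X} (h : S ⊆ T) : AltOn S ≤ AltOn T :=
  inf_le_inf_left _ fun _ hg x hx => hg x fun hxS => hx (h hxS)

theorem swap_mul_swap_mem_altOn {S : Set X} {a b c d : X} (ha : a ∈ S) (hb : b ∈ S) (hc : c ∈ S)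
    (hd : d ∈ S) (hab : a ≠ b) (hcd : c ≠ d) : swap a b * swap c d ∈ AltOn S := by
  refine ⟨subset_closure ⟨_, _, ⟨a, b, hab, rfl⟩, ⟨c, d, hcd, rfl⟩, rfl⟩, fun x hx => ?_⟩
  rw [mul_apply, swap_apply_of_ne_of_ne (ne_of_mem_of_not_mem hc hx).symm
    (ne_of_mem_of_not_mem hd hx).symm, swap_apply_of_ne_of_ne (ne_of_mem_of_not_mem ha hx).symm
    (ne_of_mem_of_not_mem hb hx).symm]

theorem exists_mem_altOn_apply_eq {S : Set X} (hS : 2 < S.ncard) {s t : X} (hs : s ∈ S)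
    (ht : t ∈ S) : ∃ g ∈ AltOn S, g t = s := by
  rcases eq_or_ne s t with rfl | hst
  · exact ⟨1, one_mem _, rfl⟩
  obtain ⟨w, hwS, hw⟩ := Set.exists_mem_notMem_of_ncard_lt_ncard (s := {s, t}) (t := S)
    (by rwa [Set.ncard_pair hst])
  simp only [Set.mem_insert_iff, Set.mem_singleton_iff, not_or] at hw
  refine ⟨swap s t * swap s w, swap_mul_swap_mem_altOn hs ht hs hwS hst (Ne.symm hw.1), ?_⟩
  rw [mul_apply, swap_apply_of_ne_of_ne hst.symm (Ne.symm hw.2), swap_apply_right]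

theorem altOn_sup_altOn_of_diff_eq_singleton {A B : Set X} {b : X} (hBA : B \ A = {b})
    (hAB : (A ∩ B).Nonempty) (hA : 2 < A.ncard) (hB : 2 < B.ncard) :
    AltOn A ⊔ AltOn B = AltOn (A ∪ B) := by
  have hbB : b ∈ B := (hBA.symm ▸ Set.mem_singleton b : b ∈ B \ A).1
  have hsup_le : AltOn A ⊔ AltOn B ≤ AltOn (A ∪ B) :=
    sup_le (altOn_mono Set.subset_union_left) (altOn_mono Set.subset_union_right)
  refine le_antisymm hsup_le (le_of_inf_stabilizer_le (b := b) hsup_le ?_ ?_)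
  · rintro g ⟨hg, hgb⟩
    refine mem_sup_left ⟨hg.1, fun x hxA => ?_⟩
    by_cases hxB : x ∈ B
    · have hx : x ∈ B \ A := ⟨hxB, hxA⟩
      rw [hBA, Set.mem_singleton_iff] at hx
      rw [hx]
      exact hgb
    · exact hg.2 x (by simp [hxA, hxB])
  · intro k hk
    have hkb : k b ∈ A ∪ B :=
      (apply_mem_iff_of_mem_fixingOutside hk.2 b).2 (Set.mem_union_right A hbB)
    obtain ⟨x, hxA, hxB⟩ := hAB
    rcases hkb with hkA | hkB
    · obtain ⟨g₁, hg₁, hg₁b⟩ := exists_mem_altOn_apply_eq hB hxB hbB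
      obtain ⟨g₂, hg₂, hg₂x⟩ := exists_mem_altOn_apply_eq hA hkA hxA
      exact ⟨g₂ * g₁, mul_mem (mem_sup_left hg₂) (mem_sup_right hg₁), by
        simp [Perm.smul_def, hg₁b, hg₂x]⟩
    · obtain ⟨g, hg, hgb⟩ := exists_mem_altOn_apply_eq hB hkB hbB
      exact ⟨g, mem_sup_right hg, hgb⟩

theorem map_ofSubtype_altGroup_le (p : X → Prop) [DecidablePred p] :
    (altGroup (Subtype p)).map ofSubtype ≤ altGroup X := by
  rw [altGroup, MonoidHom.map_closure]
  refine closure_mono ?_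
  rintro _ ⟨_, ⟨τ₁, τ₂, h₁, h₂, rfl⟩, rfl⟩
  exact ⟨_, _, h₁.of_subtype_isSwap, h₂.of_subtype_isSwap, map_mul _ _ _⟩

theorem exists_finset_forall_superset_mem_map_ofSubtype {g : Perm X} (hg : g ∈ altGroup X) :
    ∃ T : Finset X, ∀ T' : Finset X, T ⊆ T' →
      g ∈ (alternatingGroup T').map (ofSubtype : Perm T' →* Perm X) := by
  induction hg using closure_induction with
  | mem g hg =>
    obtain ⟨_, _, ⟨x, y, hxy, rfl⟩, ⟨z, w, hzw, rfl⟩, rfl⟩ := hg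
    refine ⟨{x, y, z, w}, fun T' hT' => ?_⟩
    have hmem : ∀ v ∈ ({x, y, z, w} : Finset X), v ∈ T' := fun v hv => hT' hv
    refine ⟨swap ⟨x, hmem x (by simp)⟩ ⟨y, hmem y (by simp)⟩ *
      swap ⟨z, hmem z (by simp)⟩ ⟨w, hmem w (by simp)⟩,
      mul_mem_alternatingGroup_of_isSwap ⟨_, _, by simpa using hxy, rfl⟩
        ⟨_, _, by simpa using hzw, rfl⟩, ?_⟩
    simp [ofSubtype_swap_eq]
  | one => exact ⟨∅, fun _ _ => one_mem _⟩
  | mul g h _ _ hg hh =>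
    obtain ⟨T₁, hT₁⟩ := hg
    obtain ⟨T₂, hT₂⟩ := hh
    exact ⟨T₁ ∪ T₂, fun T' hT' => mul_mem (hT₁ T' (Finset.union_subset_left hT'))
      (hT₂ T' (Finset.union_subset_right hT'))⟩
  | inv g _ hg =>
    obtain ⟨T, hT⟩ := hg
    exact ⟨T, fun T' hT' => inv_mem (hT T' hT')⟩

theorem sign_subtypePerm_eq_of_subset {S T : Finset X} (hST : S ⊆ T) {g : Perm X}
    (hS : ∀ x, g x ∈ S ↔ x ∈ S) (hT : ∀ x, g x ∈ T ↔ x ∈ T) (hfix : ∀ x, g x ≠ x → x ∈ S) :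
    sign (g.subtypePerm hS) = sign (g.subtypePerm hT) := by
  let e : {x : T // ↑x ∈ S} ≃ S := Equiv.subtypeSubtypeEquivSubtype fun hx => hST hx
  have hrestrict : e.permCongr ((g.subtypePerm hT).subtypePerm (p := fun x => ↑x ∈ S)
      (fun x => hS x)) = g.subtypePerm hS := by
    ext x
    rfl
  rw [← hrestrict, sign_permCongr]
  exact sign_subtypePerm _ _ fun x hx => hfix x fun h => hx (Subtype.ext h)

theorem altOn_coe_finset (S : Finset X) :
    AltOn (S : Set X) = (alternatingGroup S).map (ofSubtype : Perm S →* Perm X) := by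
  refine le_antisymm ?_ ?_
  · rintro g ⟨hg, hfix⟩
    obtain ⟨T, hT⟩ := exists_finset_forall_superset_mem_map_ofSubtype hg
    obtain ⟨σ, hσ, rfl⟩ := hT (T ∪ S) Finset.subset_union_left
    have hS := apply_mem_iff_of_mem_fixingOutside hfix
    have hsupp : ∀ x, ofSubtype σ x ≠ x → x ∈ S := fun x hx => by_contra fun h => hx (hfix x h)
    refine ⟨(ofSubtype σ).subtypePerm hS, mem_alternatingGroup.2 ?_, ofSubtype_subtypePerm hS hsupp⟩
    rw [sign_subtypePerm_eq_of_subset Finset.subset_union_right hS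
      (ofSubtype_apply_mem_iff_mem σ) hsupp, subtypePerm_ofSubtype]
    exact mem_alternatingGroup.1 hσ
  · rintro _ ⟨σ, hσ, rfl⟩
    refine ⟨map_ofSubtype_altGroup_le _ ⟨σ, ?_, rfl⟩, fun x hx => ofSubtype_apply_of_not_mem σ hx⟩
    rwa [altGroup_eq_alternatingGroup]

noncomputable def altOnEquivAlternatingGroup (S : Finset X) :
    AltOn (S : Set X) ≃* alternatingGroup S :=
  (MulEquiv.subgroupCongr (altOn_coe_finset S)).trans
    ((alternatingGroup S).equivMapOfInjective _ ofSubtype_injective).symm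

end

/-- If `A` and `B` are 4-element subsets of `X` with `|A ∩ B| = 3`, then the subgroup of
`Sym(X)` generated by `Alt(A) ∪ Alt(B)` equals `Alt(A ∪ B)`, which is isomorphic to the
alternating group on 5 elements. -/
theorem altOn_sup_altOn (X : Type u) [DecidableEq X] (A B : Set X)
    (hA : A.ncard = 4) (hB : B.ncard = 4) (hAB : (A ∩ B).ncard = 3) :
    AltOn A ⊔ AltOn B = AltOn (A ∪ B) ∧
    Nonempty ((AltOn (A ∪ B) : Subgroup (Equiv.Perm X)) ≃* alternatingGroup (Fin 5)) := by
  have hAfin : A.Finite := Set.finite_of_ncard_ne_zero (by omega)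
  have hBfin : B.Finite := Set.finite_of_ncard_ne_zero (by omega)
  have hcard : (A ∪ B).ncard = 5 := by
    have := Set.ncard_union_add_ncard_inter A B hAfin hBfin
    omega
  obtain ⟨b, hb⟩ : ∃ b, B \ A = {b} := by
    have := Set.ncard_inter_add_ncard_sdiff_eq_ncard B A hBfin
    rw [Set.inter_comm] at this
    exact Set.ncard_eq_one.1 (by omega)
  refine ⟨altOn_sup_altOn_of_diff_eq_singleton hb (Set.nonempty_of_ncard_ne_zero (by omega))
    (by omega) (by omega), ?_⟩
  have hfin := hAfin.union hBfin
  have hcard_toFinset : Fintype.card hfin.toFinset = 5 := by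
    rwa [Fintype.card_coe, ← Set.ncard_eq_toFinset_card _ hfin]
  rw [← hfin.coe_toFinset]
  exact ⟨(altOnEquivAlternatingGroup _).trans (Fintype.equivFinOfCardEq hcard_toFinset).altCongrHom⟩
end

section
/- For every cardinal κ, the alternating group Alt(κ), endowed with any Hausdorff shift-invariant topology (a topology for which all two-sided translations x ↦ axb are homeomorphisms), is a σ-discrete topological space: it is a countable union of discrete subspaces. -/
/-! Write `D n` for the even permutations whose support has `n` points. In a Hausdorff space the
equalizer of two continuous maps is closed, so every set `{x | x * c ≠ d * x}` is open. Given
`f ∈ D n` with support `S`, pick fresh points `e 0, e 1, …` fixed by `f`. Among the elements of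
`D n`, `f` is the only one satisfying the following finitely many such conditions, all with
3-cycles `c`, `d`. Not commuting with `(s, e (2j), e (2j+1))` for `s ∈ S` and `j ≤ n` forces `x`
to move `s`, since one of the `n + 1` disjoint pairs misses the `n`-point support of `x`; hence
`supp x = S`. Then `x` fixes `e 0` and `e 1`, so `x * (s, e 0, e 1) = (x s, e 0, e 1) * x`, and
the conditions `x * (s, e 0, e 1) ≠ (p, e 0, e 1) * x` for `p ∈ S`, `p ≠ f s` force `x s = f s`.
For finite `α` the group itself is finite, hence discrete. -/

open Equiv

universe u

open MulAction Set Function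

theorem Subgroup.isOpen_setOf_forall_mul_ne {G : Type*} [Group G] {H : Subgroup G}
    [TopologicalSpace H] [T2Space H]
    (hleft : ∀ a : H, Continuous (a * ·)) (hright : ∀ b : H, Continuous (· * b))
    {E : Set (G × G)} (hE : E.Finite) (hEH : ∀ e ∈ E, e.1 ∈ H ∧ e.2 ∈ H) :
    IsOpen {x : H | ∀ e ∈ E, (x : G) * e.1 ≠ e.2 * x} := by
  simp only [ofPred_forall]
  refine hE.isOpen_biInter fun e he => ?_
  have hset : {x : H | (x : G) * e.1 ≠ e.2 * x} =
      {x : H | x * ⟨e.1, (hEH e he).1⟩ ≠ ⟨e.2, (hEH e he).2⟩ * x} := by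
    ext x
    simp [Subtype.ext_iff]
  rw [hset]
  exact (isClosed_eq (hright _) (hleft _)).isOpen_compl

theorem exists_le_pair_notMem_of_ncard_le {α : Type*} {e : ℕ → α} (he : Injective e) {T : Set α}
    (hT : T.Finite) {n : ℕ} (hn : T.ncard ≤ n) : ∃ j ≤ n, e (2 * j) ∉ T ∧ e (2 * j + 1) ∉ T := by
  classical
  by_contra! h
  let pick : ℕ → α := fun j => e (2 * j + if e (2 * j) ∈ T then 0 else 1)
  have hmaps : ∀ j ∈ Iic n, pick j ∈ T := fun j hj => by
    by_cases hj' : e (2 * j) ∈ T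
    · simp [pick, hj']
    · simpa [pick, hj'] using h j hj hj'
  have hinj : InjOn pick (Iic n) := fun i _ j _ hij => by
    have := he hij
    split_ifs at this <;> omega
  have := ncard_le_ncard_of_injOn pick hmaps hinj hT
  simp only [ncard_eq_toFinset_card', toFinset_Iic, Nat.card_Iic] at this
  omega

theorem Equiv.Perm.ne_of_mem_compl_fixedBy {α : Type*} {f : Perm α} {s x : α}
    (hs : s ∈ (fixedBy α f)ᶜ) (hx : f x = x) : s ≠ x :=
  fun h => hs (h ▸ hx)

theorem Equiv.Perm.exists_injective_forall_apply_eq_self {α : Type*} [Infinite α] {f : Perm α}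
    (hf : (fixedBy α f)ᶜ.Finite) : ∃ e : ℕ → α, Injective e ∧ ∀ i, f (e i) = e i := by
  have hfix : (fixedBy α f).Infinite := compl_compl (fixedBy α f) ▸ hf.infinite_compl
  exact ⟨fun i => hfix.natEmbedding _ i, Subtype.val_injective.comp (hfix.natEmbedding _).injective,
    fun i => (hfix.natEmbedding _ i).2⟩

section Perm

variable {α : Type*} [DecidableEq α]

theorem altGroup_le_closure_isSwap : altGroup α ≤ Subgroup.closure {σ : Perm α | σ.IsSwap} :=
  (Subgroup.closure_le _).2 <| by
    rintro _ ⟨τ₁, τ₂, h₁, h₂, rfl⟩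
    exact mul_mem (Subgroup.subset_closure h₁) (Subgroup.subset_closure h₂)

theorem finite_compl_fixedBy_of_mem_altGroup {f : Perm α} (hf : f ∈ altGroup α) :
    (fixedBy α f)ᶜ.Finite :=
  mem_closure_isSwap'.1 (altGroup_le_closure_isSwap hf)

def threeCycle (p q r : α) : Perm α := swap p q * swap q r

theorem threeCycle_mem_altGroup {p q r : α} (hpq : p ≠ q) (hqr : q ≠ r) :
    threeCycle p q r ∈ altGroup α :=
  Subgroup.subset_closure ⟨swap p q, swap q r, ⟨p, q, hpq, rfl⟩, ⟨q, r, hqr, rfl⟩, rfl⟩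

theorem threeCycle_apply_left {p q r : α} (hpq : p ≠ q) (hpr : p ≠ r) :
    threeCycle p q r p = q := by
  simp [threeCycle, swap_apply_of_ne_of_ne hpq hpr]

theorem threeCycle_apply_right (p q r : α) : threeCycle p q r r = p := by
  simp [threeCycle]

theorem threeCycle_apply_of_ne {p q r x : α} (hp : x ≠ p) (hq : x ≠ q) (hr : x ≠ r) :
    threeCycle p q r x = x := by
  simp [threeCycle, swap_apply_of_ne_of_ne, hp, hq, hr]

theorem mul_threeCycle_of_apply_eq (g : Perm α) (p : α) {q r : α} (hq : g q = q)
    (hr : g r = r) : g * threeCycle p q r = threeCycle (g p) q r * g := by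
  conv_rhs => rw [← hq, ← hr]
  simp only [threeCycle, swap_apply_apply]
  group

section TestPairs

variable {f g : Perm α} {e : ℕ → α}

-- A pair `(c, d)` stands for the open condition `x * c ≠ d * x`.
def testPairs (f : Perm α) (e : ℕ → α) : Set (Perm α × Perm α) :=
  (fun sj : α × ℕ => (threeCycle sj.1 (e (2 * sj.2)) (e (2 * sj.2 + 1)),
      threeCycle sj.1 (e (2 * sj.2)) (e (2 * sj.2 + 1)))) ''
    ((fixedBy α f)ᶜ ×ˢ Iic (fixedBy α f)ᶜ.ncard) ∪
  (fun sp : α × α => (threeCycle sp.1 (e 0) (e 1), threeCycle sp.2 (e 0) (e 1))) ''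
    {sp ∈ (fixedBy α f)ᶜ ×ˢ (fixedBy α f)ᶜ | sp.2 ≠ f sp.1}

theorem testPairs_finite (hf : (fixedBy α f)ᶜ.Finite) : (testPairs f e).Finite :=
  ((hf.prod (finite_Iic _)).image _).union (((hf.prod hf).subset (sep_subset _ _)).image _)

theorem mem_altGroup_of_mem_testPairs (he : Injective e) (hfe : ∀ i, f (e i) = e i) :
    ∀ c ∈ testPairs f e, c.1 ∈ altGroup α ∧ c.2 ∈ altGroup α := by
  have he' : ∀ j, e j ≠ e (j + 1) := fun j h => by simpa using he h
  rintro _ (⟨⟨s, j⟩, ⟨hs, -⟩, rfl⟩ | ⟨⟨s, p⟩, ⟨⟨hs, hp⟩, -⟩, rfl⟩)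
  · exact ⟨threeCycle_mem_altGroup (Perm.ne_of_mem_compl_fixedBy hs (hfe _)) (he' _),
      threeCycle_mem_altGroup (Perm.ne_of_mem_compl_fixedBy hs (hfe _)) (he' _)⟩
  · exact ⟨threeCycle_mem_altGroup (Perm.ne_of_mem_compl_fixedBy hs (hfe _)) (he' 0),
      threeCycle_mem_altGroup (Perm.ne_of_mem_compl_fixedBy hp (hfe _)) (he' 0)⟩

theorem mul_ne_of_mem_testPairs (hfe : ∀ i, f (e i) = e i) :
    ∀ c ∈ testPairs f e, f * c.1 ≠ c.2 * f := by
  rintro _ (⟨⟨s, j⟩, ⟨hs, -⟩, rfl⟩ | ⟨⟨s, p⟩, ⟨-, hp⟩, rfl⟩) h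
  · have hfs : f s ∈ (fixedBy α f)ᶜ := fun h' => hs (f.injective h')
    have key : f (threeCycle s (e (2 * j)) (e (2 * j + 1)) s) =
        threeCycle s (e (2 * j)) (e (2 * j + 1)) (f s) := congr($h s)
    rw [threeCycle_apply_left (Perm.ne_of_mem_compl_fixedBy hs (hfe _))
      (Perm.ne_of_mem_compl_fixedBy hs (hfe _)), hfe,
      threeCycle_apply_of_ne (show f s ≠ s from hs) (Perm.ne_of_mem_compl_fixedBy hfs (hfe _))
      (Perm.ne_of_mem_compl_fixedBy hfs (hfe _))] at key
    exact Perm.ne_of_mem_compl_fixedBy hfs (hfe _) key.symm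
  · have key : f (threeCycle s (e 0) (e 1) (e 1)) = threeCycle p (e 0) (e 1) (f (e 1)) :=
      congr($h (e 1))
    rw [threeCycle_apply_right, hfe, threeCycle_apply_right] at key
    exact hp key.symm

theorem apply_ne_self_of_forall_testPairs (he : Injective e) (hg : (fixedBy α g)ᶜ.Finite)
    (hcard : (fixedBy α g)ᶜ.ncard ≤ (fixedBy α f)ᶜ.ncard)
    (hgE : ∀ c ∈ testPairs f e, g * c.1 ≠ c.2 * g) {s : α} (hs : s ∈ (fixedBy α f)ᶜ) :
    g s ≠ s := by
  intro hgs
  obtain ⟨j, hj, ha, hb⟩ := exists_le_pair_notMem_of_ncard_le he hg hcard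
  refine hgE _ (Or.inl ⟨(s, j), ⟨hs, hj⟩, rfl⟩) ?_
  have := mul_threeCycle_of_apply_eq g s (not_not.1 ha) (not_not.1 hb)
  rwa [hgs] at this

theorem eq_of_forall_testPairs_mul_ne (he : Injective e) (hfe : ∀ i, f (e i) = e i)
    (hg : (fixedBy α g)ᶜ.Finite) (hcard : (fixedBy α g)ᶜ.ncard = (fixedBy α f)ᶜ.ncard)
    (hgE : ∀ c ∈ testPairs f e, g * c.1 ≠ c.2 * g) : g = f := by
  have hmoves : (fixedBy α f)ᶜ ⊆ (fixedBy α g)ᶜ := fun s hs =>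
    apply_ne_self_of_forall_testPairs he hg hcard.le hgE hs
  have hfix : fixedBy α g = fixedBy α f :=
    compl_inj_iff.1 (eq_of_subset_of_ncard_le hmoves hcard.le hg).symm
  have hge : ∀ i, g (e i) = e i := fun i => (hfix ▸ hfe i : e i ∈ fixedBy α g)
  ext s
  by_cases hs : s ∈ fixedBy α f
  · exact (hfix ▸ hs : s ∈ fixedBy α g).trans hs.symm
  by_contra hne
  have hgs : g s ∈ (fixedBy α f)ᶜ := hfix ▸ fun h => hmoves hs (g.injective h)
  exact hgE _ (Or.inr ⟨(s, g s), ⟨⟨hs, hgs⟩, hne⟩, rfl⟩)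
    (mul_threeCycle_of_apply_eq g s (hge 0) (hge 1))

end TestPairs

end Perm

/-- The alternating group `Alt(α)`, endowed with any Hausdorff shift-invariant topology
(all two-sided translations `x ↦ a * x * b` are homeomorphisms), is σ-discrete:
a countable union of discrete subspaces. -/
theorem alt_sigma_discrete (α : Type u) [DecidableEq α]
    (t : TopologicalSpace (altGroup α)) (ht2 : @T2Space (altGroup α) t)
    (hshift : ∀ a b : altGroup α,
      @IsHomeomorph (altGroup α) (altGroup α) t t (fun x => a * x * b)) :
    ∃ D : ℕ → Set (altGroup α), (⋃ n, D n) = Set.univ ∧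
      ∀ n, @DiscreteTopology (D n) (TopologicalSpace.induced Subtype.val t) := by
  refine ⟨fun n => {f | (fixedBy α (f : Perm α))ᶜ.ncard = n},
    iUnion_eq_univ_iff.2 fun f => ⟨_, rfl⟩, fun n => ?_⟩
  rcases finite_or_infinite α with hα | hα
  · have : DiscreteTopology (altGroup α) := Finite.instDiscreteTopology
    infer_instance
  refine discreteTopology_subtype_iff'.2 fun f hf => ?_
  have hfin := finite_compl_fixedBy_of_mem_altGroup f.2
  obtain ⟨e, he, hfe⟩ := Perm.exists_injective_forall_apply_eq_self hfin
  refine ⟨_, Subgroup.isOpen_setOf_forall_mul_ne (fun a => by simpa using (hshift a 1).continuous)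
    (fun b => by simpa using (hshift 1 b).continuous) (testPairs_finite (e := e) hfin)
    (mem_altGroup_of_mem_testPairs he hfe), ?_⟩
  ext g
  constructor
  · rintro ⟨hgE, hg⟩
    exact Subtype.ext (eq_of_forall_testPairs_mul_ne he hfe
      (finite_compl_fixedBy_of_mem_altGroup g.2) (hg.trans hf.symm) hgE)
  · rintro rfl
    exact ⟨mul_ne_of_mem_testPairs hfe, hf⟩
end

section
/- For every cardinal κ, every n ∈ ℕ, and every Hausdorff shift-invariant topology τ on Alt(κ), the set Alt_n(κ) = {f ∈ Alt(κ) : |supp(f)| = n} is a discrete subspace of (Alt(κ), τ). -/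
open Equiv

universe u

/-!
Centralizers are closed in a Hausdorff group with separately continuous multiplication, so
"does not commute with `p`" is an open condition. Let `f` have support `F` of size `n` and pick
`n + 2` points `A` outside `F` (for finite `α` the group is finite and there is nothing to prove).
Near `f`, no element commutes with any 3-cycle `swap x a * swap x b` with `x ∈ F` and `a ≠ b` in
`A`, since `f` does not. An element `g` with support of size `n` fixes two points of `A`, so if it
lies in that neighbourhood it moves every point of `F`; hence its support is `F`. Only finitely
many permutations are supported in `F`, and the Hausdorff topology separates them from `f`.
-/

open Filter Topology

theorem eventually_not_commute_nhds {M : Type*} [Mul M] [TopologicalSpace M]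
    [SeparatelyContinuousMul M] [T2Space M] {p m : M} (h : ¬Commute p m) :
    ∀ᶠ x in 𝓝 m, ¬Commute p x :=
  Filter.mem_of_superset
    ((Set.isClosed_centralizer {p}).isOpen_compl.mem_nhds fun hm => h (hm p rfl))
    fun _ hx hcomm => hx fun _ hq => hq ▸ hcomm.eq

theorem discreteTopology_subtype_of_eventually {X : Type*} [TopologicalSpace X] {S : Set X}
    (h : ∀ x ∈ S, ∀ᶠ y in 𝓝 x, y ∈ S → y = x) : DiscreteTopology S := by
  refine discreteTopology_subtype_iff'.mpr fun x hx => ?_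
  obtain ⟨U, hU, hUo, hxU⟩ := eventually_nhds_iff.mp (h x hx)
  exact ⟨U, hUo, Set.eq_singleton_iff_unique_mem.mpr ⟨⟨hxU, hx⟩, fun y hy => hU y hy.1 hy.2⟩⟩

theorem Set.Finite.eventually_nhds_mem_imp_eq {X : Type*} [TopologicalSpace X] [T1Space X]
    {E : Set X} (hE : E.Finite) (x : X) : ∀ᶠ y in 𝓝 x, y ∈ E → y = x :=
  Filter.mem_of_superset ((hE.sdiff (t := {x})).isClosed.compl_mem_nhds fun h => h.2 rfl)
    fun _ hy hyE => by_contra fun hne => hy ⟨hyE, hne⟩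

theorem Set.exists_pair_mem_sdiff_of_encard_eq {α : Type*} {A B : Set α} {n : ℕ}
    (hB : B.encard = n) (hA : A.encard = n + 2) :
    ∃ a ∈ A, ∃ b ∈ A, a ≠ b ∧ a ∉ B ∧ b ∉ B := by
  have hle : (n : ℕ∞) + 2 ≤ (A \ B).encard + n := by
    rw [← hA, ← hB]; exact Set.encard_le_encard_sdiff_add_encard A B
  have htwo : 1 < (A \ B).encard := by
    rw [add_comm (A \ B).encard] at hle
    have := (ENat.add_le_add_iff_left (ENat.natCast_ne_top n)).mp hle
    exact lt_of_lt_of_le (by norm_num) this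
  obtain ⟨a, b, ha, hb, hab⟩ := Set.one_lt_encard_iff.mp htwo
  exact ⟨a, ha.1, b, hb.1, hab, ha.2, hb.2⟩

namespace Equiv.Perm

variable {α : Type*}

theorem finite_setOf_support_subset (F : Set α) (hF : F.Finite) :
    {σ : Perm α | {x | σ x ≠ x} ⊆ F}.Finite := by
  classical
  have : Finite F := hF
  refine (Set.finite_range (ofSubtype (p := (· ∈ F)))).subset fun σ hσ => ?_
  refine ⟨σ.subtypePerm fun x => ?_, ofSubtype_subtypePerm _ fun x hx => hσ hx⟩
  by_cases hx : σ x = x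
  · rw [hx]
  · exact iff_of_true (hσ (σ.injective.ne hx)) (hσ hx)

variable [DecidableEq α]

theorem swap_mul_swap_mem_altGroup {x a b : α} (ha : x ≠ a) (hb : x ≠ b) :
    swap x a * swap x b ∈ altGroup α :=
  Subgroup.subset_closure ⟨swap x a, swap x b, ⟨x, a, ha, rfl⟩, ⟨x, b, hb, rfl⟩, rfl⟩

theorem commute_swap_of_apply_eq {g : Perm α} {x a : α} (hx : g x = x) (ha : g a = a) :
    Commute (swap x a) g := by
  have hx' : g⁻¹ x = x := inv_eq_iff_eq.mpr hx.symm
  have ha' : g⁻¹ a = a := inv_eq_iff_eq.mpr ha.symm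
  show swap x a * g = g * swap x a
  rw [swap_mul_eq_mul_swap, hx', ha']

theorem commute_swap_mul_swap_of_apply_eq {g : Perm α} {x a b : α} (hx : g x = x)
    (ha : g a = a) (hb : g b = b) : Commute (swap x a * swap x b) g :=
  (commute_swap_of_apply_eq hx ha).mul_left (commute_swap_of_apply_eq hx hb)

theorem not_commute_swap_mul_swap {f : Perm α} {x a b : α} (hx : f x ≠ x) (ha : f a = a)
    (hab : a ≠ b) : ¬Commute (swap x a * swap x b) f := by
  have hax : a ≠ x := fun h => hx (h ▸ ha)
  intro h
  have := congrArg (· a) h.eq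
  simp only [Perm.mul_apply, ha, swap_apply_of_ne_of_ne hax hab, swap_apply_right] at this
  exact hx this.symm

theorem support_eq_of_forall_not_commute_swap_mul_swap {f g : Perm α} {n : ℕ} {A : Set α}
    (hf : {x | f x ≠ x}.encard = n) (hg : {x | g x ≠ x}.encard = n) (hA : A.encard = n + 2)
    (hcomm : ∀ x, f x ≠ x → ∀ a ∈ A, ∀ b ∈ A, a ≠ b → ¬Commute (swap x a * swap x b) g) :
    {x | g x ≠ x} = {x | f x ≠ x} := by
  have hfg : {x | f x ≠ x} ⊆ {x | g x ≠ x} := fun x hx => by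
    by_contra hgx
    obtain ⟨a, ha, b, hb, hab, hga, hgb⟩ := Set.exists_pair_mem_sdiff_of_encard_eq hg hA
    exact hcomm x hx a ha b hb hab
      (commute_swap_mul_swap_of_apply_eq (not_not.mp hgx) (not_not.mp hga) (not_not.mp hgb))
  exact ((Set.finite_of_encard_eq_coe hf).eq_of_subset_of_encard_le hfg (by rw [hf, hg])).symm

end Equiv.Perm

theorem altGroup.eventually_not_commute_swap_mul_swap {α : Type*} [DecidableEq α]
    [TopologicalSpace (altGroup α)] [SeparatelyContinuousMul (altGroup α)] [T2Space (altGroup α)]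
    {f : altGroup α} {x a b : α} (hx : (f : Perm α) x ≠ x) (ha : (f : Perm α) a = a)
    (hxb : x ≠ b) (hab : a ≠ b) :
    ∀ᶠ g : altGroup α in 𝓝 f, ¬Commute (swap x a * swap x b) (g : Perm α) := by
  have hxa : x ≠ a := fun h => hx (h ▸ ha)
  have hf : ¬Commute (⟨_, Perm.swap_mul_swap_mem_altGroup hxa hxb⟩ : altGroup α) f :=
    fun h => Perm.not_commute_swap_mul_swap hx ha hab (Submonoid.commute_coe_coe.mpr h)
  exact (eventually_not_commute_nhds hf).mono fun _ hg h => hg (Submonoid.commute_coe_coe.mp h)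

/-- For every cardinal (type `α`), every `n : ℕ` and every Hausdorff shift-invariant topology
`t` on `Alt(α)`, the set `Alt_n(α) = {f ∈ Alt(α) : |supp f| = n}` is a discrete subspace. -/
theorem altn_discrete (α : Type u) [DecidableEq α] (n : ℕ)
    (t : TopologicalSpace (altGroup α)) (ht2 : @T2Space (altGroup α) t)
    (hshift : ∀ a b : altGroup α,
      @IsHomeomorph (altGroup α) (altGroup α) t t (fun x => a * x * b)) :
    @DiscreteTopology {f : altGroup α | {x | (f : Equiv.Perm α) x ≠ x}.encard = (n : ℕ∞)}
      (TopologicalSpace.induced Subtype.val t) := by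
  let _ := t
  have : SeparatelyContinuousMul (altGroup α) :=
    ⟨fun {a} => by simpa using (hshift a 1).continuous,
      fun {a} => by simpa using (hshift 1 a).continuous⟩
  rcases finite_or_infinite α with hα | hα
  · infer_instance
  refine discreteTopology_subtype_of_eventually fun f hf => ?_
  set F := {x | (f : Perm α) x ≠ x}
  have hFfin : F.Finite := Set.finite_of_encard_eq_coe hf
  obtain ⟨A, hAF, hA⟩ := Set.exists_subset_encard_eq (s := Fᶜ) (k := (n + 2 : ℕ))
    (by rw [hFfin.infinite_compl.encard_eq]; exact le_top)
  have hAfin : A.Finite := Set.finite_of_encard_eq_coe hA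
  have hsupp : ∀ᶠ g : altGroup α in 𝓝 f, {x | (g : Perm α) x ≠ x} ⊆ F → g = f :=
    ((Perm.finite_setOf_support_subset F hFfin).preimage
      Subtype.val_injective.injOn).eventually_nhds_mem_imp_eq f
  have hcomm : ∀ᶠ g : altGroup α in 𝓝 f, ∀ x ∈ F, ∀ a ∈ A, ∀ b ∈ A, a ≠ b →
      ¬Commute (swap x a * swap x b) (g : Perm α) := by
    refine hFfin.eventually_all.mpr fun x hx => hAfin.eventually_all.mpr fun a ha =>
      hAfin.eventually_all.mpr fun b hb => ?_
    by_cases hab : a = b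
    · exact Eventually.of_forall fun _ hab' => absurd hab hab'
    exact (altGroup.eventually_not_commute_swap_mul_swap hx (not_not.mp (hAF ha))
      (fun (h : x = b) => hAF hb (h ▸ hx)) hab).mono fun _ hg _ => hg
  filter_upwards [hsupp, hcomm] with g hgsupp hgcomm hg
  exact hgsupp (Perm.support_eq_of_forall_not_commute_swap_mul_swap hf hg
    (by exact_mod_cast hA) hgcomm).subset
end

section
/- Let κ be an infinite cardinal and G a group with Alt(κ) ⊆ G ⊆ Sym(κ). Then the topology of pointwise convergence on G (generated by the sets {g ∈ G : g(a) = b} for a, b ∈ κ) coincides with the restricted Zariski topology Z'_G on G. -/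
open Equiv

universe u

/-- The restricted Zariski topology on a group `G`, generated by the subbase of sets
`G \ {a}`, `{x : x * b * x⁻¹ ≠ a * b * a⁻¹}` and `{x : (x*c*x⁻¹) * b * (x*c*x⁻¹)⁻¹ ≠ b}`
for `a, b, c ∈ G` with `b² = c² = 1`. -/
def restrictedZariski (G : Type u) [Group G] : TopologicalSpace G :=
  TopologicalSpace.generateFrom
    ({U | ∃ a : G, U = {a}ᶜ} ∪
     {U | ∃ a b : G, b ^ 2 = 1 ∧ U = {x | x * b * x⁻¹ ≠ a * b * a⁻¹}} ∪
     {U | ∃ b c : G, b ^ 2 = 1 ∧ c ^ 2 = 1 ∧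
        U = {x | (x * c * x⁻¹) * b * (x * c * x⁻¹)⁻¹ ≠ b}})

/-!
The pointwise topology makes `Perm α` a Hausdorff topological group, and every subbasic set of
the restricted Zariski topology is the preimage of the complement of a point under a continuous
map, so the pointwise topology is finer.

Conversely, let `g a = b`. Take five double transpositions `cᵢ = (a pᵢ)(qᵢ rᵢ)` and two
`dₖ = (a sₖ)(uₖ vₖ)` on pairwise distinct points other than `a`; they lie in `Alt(α) ≤ G`. If
`x cᵢ x⁻¹` commutes with no `g dₖ g⁻¹`, then for `y = g⁻¹ x` each `y cᵢ y⁻¹` moves a point of the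
four-element support of `dₖ`. Unless `y a` lies in that support, this puts five distinct points
`y pᵢ`, `y qᵢ` or `y rᵢ` into it. So `y a` lies in the supports of both `d₀` and `d₁`, that is
`y a = a` and `x a = b`. This finite intersection of Zariski open sets contains `g`.
-/

open Function Topology

section Zariski

variable {G : Type u} [Group G]

theorem le_restrictedZariski [TopologicalSpace G] [IsTopologicalGroup G] [T1Space G] :
    ‹TopologicalSpace G› ≤ restrictedZariski G := by
  refine le_generateFrom ?_
  rintro _ ((⟨a, rfl⟩ | ⟨a, b, -, rfl⟩) | ⟨b, c, -, -, rfl⟩)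
  · exact isOpen_compl_singleton
  · exact isOpen_compl_singleton.preimage (by fun_prop : Continuous fun x : G => x * b * x⁻¹)
  · exact isOpen_compl_singleton.preimage
      (by fun_prop : Continuous fun x : G => (x * c * x⁻¹) * b * (x * c * x⁻¹)⁻¹)

theorem isOpen_restrictedZariski_not_commute {b c : G} (hb : b ^ 2 = 1) (hc : c ^ 2 = 1) :
    IsOpen[restrictedZariski G] {x | ¬Commute (x * c * x⁻¹) b} := by
  have hopen : IsOpen[restrictedZariski G] {x | (x * c * x⁻¹) * b * (x * c * x⁻¹)⁻¹ ≠ b} :=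
    TopologicalSpace.isOpen_generateFrom_of_mem (Or.inr ⟨b, c, hb, hc, rfl⟩)
  convert hopen using 3 with x
  exact not_congr mul_inv_eq_iff_eq_mul.symm

theorem commute_conj_conj_iff (g x c d : G) :
    Commute (x * c * x⁻¹) (g * d * g⁻¹) ↔ Commute ((g⁻¹ * x) * c * (g⁻¹ * x)⁻¹) d := by
  rw [← Commute.conj_iff g⁻¹]
  congr! 1 <;> group

end Zariski

namespace Equiv.Perm

variable (α : Type*) [TopologicalSpace α]

abbrev pointwiseTopology : TopologicalSpace (Perm α) :=
  .induced (fun σ : Perm α => (σ : α → α)) Pi.topologicalSpace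

attribute [local instance] pointwiseTopology

theorem continuous_pointwise_iff {X : Type*} [TopologicalSpace X] {f : X → Perm α} :
    Continuous f ↔ ∀ a, Continuous fun x => f x a :=
  continuous_induced_rng.trans continuous_pi_iff

theorem t2Space_pointwiseTopology [T2Space α] : T2Space (Perm α) :=
  (IsEmbedding.induced DFunLike.coe_injective).t2Space

theorem isTopologicalGroup_pointwiseTopology [DiscreteTopology α] :
    IsTopologicalGroup (Perm α) where
  continuous_mul := by
    have heval : Continuous fun p : (α → α) × α => p.1 p.2 :=
      continuous_prod_of_discrete_right.2 continuous_apply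
    refine (continuous_pointwise_iff α).2 fun a => ?_
    have hpair : Continuous fun p : Perm α × Perm α => ((p.1 : α → α), p.2 a) :=
      (continuous_induced_dom.comp continuous_fst).prodMk
        ((continuous_apply a).comp (continuous_induced_dom.comp continuous_snd))
    exact heval.comp hpair
  continuous_inv := by
    refine (continuous_pointwise_iff α).2 fun a => continuous_discrete_rng.2 fun b => ?_
    have hfiber : (fun σ : Perm α => σ⁻¹ a) ⁻¹' {b} = (fun σ : Perm α => σ b) ⁻¹' {a} :=
      Set.ext fun σ => inv_eq_iff_eq.trans eq_comm
    rw [hfiber]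
    exact (isOpen_discrete _).preimage ((continuous_apply b).comp continuous_induced_dom)

end Equiv.Perm

theorem exists_injective_forall_ne {α β : Type*} [Infinite α] [Finite β] (a : α) :
    ∃ e : β → α, Injective e ∧ ∀ j, e j ≠ a := by
  have : Infinite ({a}ᶜ : Set α) := (Set.finite_singleton a).infinite_compl.to_subtype
  obtain ⟨n, ⟨eβ⟩⟩ := Finite.exists_equiv_fin β
  let f : β ↪ ({a}ᶜ : Set α) :=
    eβ.toEmbedding.trans (Fin.valEmbedding.trans (Infinite.natEmbedding _))
  exact ⟨fun j => f j, Subtype.val_injective.comp f.injective, fun j => (f j).2⟩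

namespace Equiv.Perm

variable {α : Type*}

theorem exists_apply_ne_and_apply_ne_of_not_commute {σ τ : Perm α} (h : ¬Commute σ τ) :
    ∃ y, σ y ≠ y ∧ τ y ≠ y := by
  contrapose! h
  exact Disjoint.commute fun y => (em (σ y = y)).imp_right (h y)

variable [DecidableEq α]

def doubleTransposition (a : α) (p : Fin 3 → α) : Perm α :=
  swap a (p 0) * swap (p 1) (p 2)

variable {a : α} {p : Fin 3 → α}

theorem doubleTransposition_mem_altGroup (hp : Injective p) (ha : a ∉ Set.range p) :
    doubleTransposition a p ∈ altGroup α :=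
  Subgroup.subset_closure ⟨_, _, ⟨a, p 0, fun h => ha ⟨0, h.symm⟩, rfl⟩,
    ⟨p 1, p 2, hp.ne (by decide), rfl⟩, rfl⟩

theorem doubleTransposition_sq (hp : Injective p) (ha : a ∉ Set.range p) :
    doubleTransposition a p ^ 2 = 1 := by
  have hnodup : [a, p 0, p 1, p 2].Nodup := by
    have hne : ∀ j, a ≠ p j := fun j h => ha ⟨j, h.symm⟩
    simp [hne, hp.ne, Fin.ext_iff]
  rw [doubleTransposition, (disjoint_swap_swap hnodup).commute.mul_pow]
  simp [sq]

theorem conj_doubleTransposition (x : Perm α) (a : α) (p : Fin 3 → α) :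
    x * doubleTransposition a p * x⁻¹ = doubleTransposition (x a) (x ∘ p) := by
  simp only [doubleTransposition, comp_apply, swap_apply_apply]
  group

theorem mem_of_doubleTransposition_apply_ne {y : α} (h : doubleTransposition a p y ≠ y) :
    y = a ∨ y ∈ Set.range p := by
  contrapose! h
  obtain ⟨hya, hyp⟩ := h
  simp only [Set.mem_range, not_exists] at hyp
  rw [doubleTransposition, mul_apply, swap_apply_of_ne_of_ne (Ne.symm (hyp 1)) (Ne.symm (hyp 2)),
    swap_apply_of_ne_of_ne hya (Ne.symm (hyp 0))]

theorem doubleTransposition_apply_self (ha : a ∉ Set.range p) :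
    doubleTransposition a p a = p 0 := by
  rw [doubleTransposition, mul_apply, swap_apply_of_ne_of_ne (fun h => ha ⟨1, h.symm⟩)
    (fun h => ha ⟨2, h.symm⟩), swap_apply_left]

theorem not_commute_doubleTransposition {q : Fin 3 → α} (hpa : a ∉ Set.range p)
    (hqa : a ∉ Set.range q) (hpq : _root_.Disjoint (Set.range p) (Set.range q)) :
    ¬Commute (doubleTransposition a p) (doubleTransposition a q) := by
  have hfix : ∀ {r s : Fin 3 → α}, a ∉ Set.range s → _root_.Disjoint (Set.range r) (Set.range s) →
      doubleTransposition a r (s 0) = s 0 := fun hsa hrs => by_contra fun h =>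
    (mem_of_doubleTransposition_apply_ne h).elim (fun h' => hsa ⟨0, h'⟩)
      (hrs.notMem_of_mem_right ⟨0, rfl⟩)
  intro h
  have hab := congrArg (· a) h.eq
  simp only [mul_apply, doubleTransposition_apply_self hpa, doubleTransposition_apply_self hqa,
    hfix hqa hpq, hfix hpa hpq.symm] at hab
  exact hpq.ne_of_mem ⟨0, rfl⟩ ⟨0, rfl⟩ hab.symm

theorem apply_mem_of_forall_not_commute {ι : Type*} [Fintype ι] {x τ : Perm α}
    {f : ι → Fin 3 → α} (hf : Injective (uncurry f)) {t : Finset α}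
    (ht : t.card < Fintype.card ι) (hτ : ∀ y, τ y ≠ y → y ∈ t)
    (hx : ∀ i, ¬Commute (x * doubleTransposition a (f i) * x⁻¹) τ) : x a ∈ t := by
  by_contra hxa
  have hmeet : ∀ i, ∃ j, x (f i j) ∈ t := by
    intro i
    obtain ⟨y, hσy, hτy⟩ := exists_apply_ne_and_apply_ne_of_not_commute (hx i)
    rw [conj_doubleTransposition] at hσy
    rcases mem_of_doubleTransposition_apply_ne hσy with rfl | ⟨j, rfl⟩
    · exact absurd (hτ _ hτy) hxa
    · exact ⟨j, hτ _ hτy⟩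
  choose j hj using hmeet
  have := Finset.card_le_card_of_injOn (s := Finset.univ) (fun i => x (f i (j i)))
    (fun i _ => hj i) fun i _ i' _ h =>
      congrArg Prod.fst (hf (x.injective h) : (i, j i) = (i', j i'))
  rw [Finset.card_univ] at this
  omega

theorem apply_eq_self_of_forall_not_commute {ι : Type*} [Fintype ι] (hι : 4 < Fintype.card ι)
    {x : Perm α} {e : ι ⊕ Fin 2 → Fin 3 → α} (he : Injective (uncurry e))
    (hx : ∀ i k, ¬Commute (x * doubleTransposition a (e (.inl i)) * x⁻¹)
      (doubleTransposition a (e (.inr k)))) :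
    x a = a := by
  have hmem : ∀ k, x a = a ∨ x a ∈ Set.range (e (.inr k)) := fun k => by
    have hcard : (insert a (Finset.univ.image (e (.inr k)))).card < Fintype.card ι :=
      calc _ ≤ (Finset.univ.image (e (.inr k))).card + 1 := Finset.card_insert_le _ _
        _ ≤ 3 + 1 := by grw [Finset.card_image_le, Finset.card_univ, Fintype.card_fin]
        _ < _ := hι
    have hinl : Injective (uncurry (e ∘ .inl)) :=
      he.comp (Sum.inl_injective.prodMap injective_id)
    simpa using apply_mem_of_forall_not_commute hinl hcard
      (fun y hy => by simpa using mem_of_doubleTransposition_apply_ne hy) (fun i => hx i k)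
  rcases hmem 0 with h | ⟨j, hj⟩
  · exact h
  rcases hmem 1 with h | ⟨j', hj'⟩
  · exact h
  have hk := congrArg Prod.fst (he (a₁ := (.inr 0, j)) (a₂ := (.inr 1, j')) (hj.trans hj'.symm))
  exact absurd hk (by simp)

end Equiv.Perm

open Equiv.Perm in
theorem isOpen_restrictedZariski_setOf_apply_eq {α : Type*} [DecidableEq α] [Infinite α]
    {G : Subgroup (Perm α)} (hG : altGroup α ≤ G) (a b : α) :
    IsOpen[restrictedZariski G] {x : G | (x : Perm α) a = b} := by
  let := restrictedZariski G
  refine isOpen_iff_forall_mem_open.2 fun g (hg : (g : Perm α) a = b) => ?_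
  obtain ⟨e, he, hea⟩ := exists_injective_forall_ne (β := (Fin 5 ⊕ Fin 2) × Fin 3) a
  have hrange : ∀ j, a ∉ Set.range (curry e j) := fun j ⟨_, h⟩ => hea _ h
  let D : Fin 5 ⊕ Fin 2 → G := fun j => ⟨doubleTransposition a (curry e j),
    hG (doubleTransposition_mem_altGroup (he.comp (Prod.mk_right_injective j)) (hrange j))⟩
  have hD : ∀ j, D j ^ 2 = 1 := fun j =>
    Subtype.ext (doubleTransposition_sq (he.comp (Prod.mk_right_injective j)) (hrange j))
  refine ⟨⋂ i, ⋂ k, {x | ¬Commute (x * D (.inl i) * x⁻¹) (g * D (.inr k) * g⁻¹)}, ?_, ?_, ?_⟩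
  · intro x hx
    simp only [Set.mem_iInter, Set.mem_ofPred_eq, commute_conj_conj_iff] at hx
    have hfix : ((g⁻¹ * x : G) : Perm α) a = a :=
      apply_eq_self_of_forall_not_commute (e := curry e) (by simp) (by rwa [uncurry_curry])
        fun i k h => hx i k (h.of_map (f := G.subtype) Subtype.val_injective)
    rw [Subgroup.coe_mul, Subgroup.coe_inv, mul_apply, inv_eq_iff_eq] at hfix
    exact hfix.trans hg
  · refine isOpen_iInter_of_finite fun i => isOpen_iInter_of_finite fun k => ?_
    refine isOpen_restrictedZariski_not_commute ?_ (hD _)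
    rw [← MulAut.conj_apply, ← map_pow, hD, map_one]
  · simp only [Set.mem_iInter, Set.mem_ofPred_eq, Commute.conj_iff]
    refine fun i k h => not_commute_doubleTransposition (hrange _) (hrange _) ?_ (h.map G.subtype)
    refine Set.disjoint_left.2 ?_
    rintro _ ⟨j, rfl⟩ ⟨j', h'⟩
    exact Sum.inr_ne_inl (congrArg Prod.fst (he h'))

section Pointwise

variable {α : Type u} [TopologicalSpace α] [DiscreteTopology α]

theorem induced_pointwise_le_restrictedZariski (G : Subgroup (Perm α)) :
    TopologicalSpace.induced (fun g : G => ((g : Perm α) : α → α)) Pi.topologicalSpace ≤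
      restrictedZariski G := by
  let := Perm.pointwiseTopology α
  have := Perm.isTopologicalGroup_pointwiseTopology α
  have := Perm.t2Space_pointwiseTopology α
  have hsub : TopologicalSpace.induced (fun g : G => ((g : Perm α) : α → α)) Pi.topologicalSpace =
      instTopologicalSpaceSubtype := induced_compose.symm
  rw [hsub]
  exact le_restrictedZariski

theorem restrictedZariski_le_induced_pointwise [DecidableEq α] [Infinite α] {G : Subgroup (Perm α)}
    (hG : altGroup α ≤ G) :
    restrictedZariski G ≤
      TopologicalSpace.induced (fun g : G => ((g : Perm α) : α → α)) Pi.topologicalSpace := by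
  let := restrictedZariski G
  rw [← continuous_iff_le_induced]
  exact continuous_pi fun a => continuous_discrete_rng.2 fun b =>
    isOpen_restrictedZariski_setOf_apply_eq hG a b

end Pointwise

/-- For an infinite type `α` and a group `G` with `Alt(α) ⊆ G ⊆ Sym(α)`, the topology of
pointwise convergence on `G` (the topology induced from the product topology on `α → α`
with `α` discrete) coincides with the restricted Zariski topology on `G`. -/
theorem pointwise_eq_zariski (α : Type u) [DecidableEq α] [Infinite α]
    (G : Subgroup (Equiv.Perm α)) (hG : altGroup α ≤ G) :
    TopologicalSpace.induced (fun g : G => ((g : Equiv.Perm α) : α → α))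
        (@Pi.topologicalSpace α (fun _ => α) (fun _ => ⊥)) =
      restrictedZariski G := by
  let : TopologicalSpace α := ⊥
  have : DiscreteTopology α := ⟨rfl⟩
  exact le_antisymm (induced_pointwise_le_restrictedZariski G)
    (restrictedZariski_le_induced_pointwise hG)
end

section
/- Every infinite abelian group G has weak compatibility number cn(G) = ω; i.e., G satisfies the weak ω₁-compatibility condition: for any finite group F and isomorphisms f_i : F → F_i (i < ω₁) onto finite subgroups F_i of G, there exist i < j < ω₁ and a homomorphism φ : F_i + F_j → F with φ ∘ f_i = φ ∘ f_j = id_F. -/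
/-! The inverses `(f i)⁻¹` are partial maps `G → F` with domains of size `|F|` into the finite
set `F`, and any infinite family of such partial maps contains two that agree on their common
domain: if some point lies in infinitely many domains, infinitely many of the maps take the same
value there and we induct on the domain size after deleting that point; otherwise every point
lies in only finitely many domains, and two of the domains are disjoint. Two inverses agreeing on
`F i ∩ F j` glue to a homomorphism on `F i + F j`, because the kernel of the addition map
`F i × F j → F i + F j` is the antidiagonal of `F i ∩ F j`. -/

open Cardinal Set

universe u

theorem exists_ne_eqOn_inter_of_card_le {ι α β : Type*} [Infinite ι] [Finite β] {n : ℕ}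
    (s : ι → Finset α) (hs : ∀ i, (s i).card ≤ n) (g : ι → α → β) :
    ∃ i j, i ≠ j ∧ EqOn (g i) (g j) (↑(s i) ∩ ↑(s j)) := by
  classical
  induction n generalizing ι with
  | zero =>
    obtain ⟨i, j, hij⟩ := exists_pair_ne ι
    refine ⟨i, j, hij, fun x hx => ?_⟩
    simp [Finset.card_eq_zero.1 (Nat.le_zero.1 (hs i))] at hx
  | succ n ih =>
    by_cases hshared : ∃ x, {i | x ∈ s i}.Infinite
    · obtain ⟨x, hx⟩ := hshared
      obtain ⟨c, hc⟩ : ∃ c, {i | x ∈ s i ∧ g i x = c}.Infinite := by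
        by_contra! hfin
        exact hx <| (finite_iUnion hfin).subset fun i hi => mem_iUnion.2 ⟨g i x, hi, rfl⟩
      have := hc.to_subtype
      obtain ⟨⟨i, hxi, hi⟩, ⟨j, hxj, hj⟩, hij, hagree⟩ :=
        ih (fun i : {i | x ∈ s i ∧ g i x = c} => (s i).erase x)
          (fun i => by rw [Finset.card_erase_of_mem i.2.1]; exact Nat.sub_le_of_le_add (hs i))
          (fun i => g i)
      refine ⟨i, j, fun h => hij (Subtype.ext h), fun y hy => ?_⟩
      obtain rfl | hyx := eq_or_ne y x
      · rw [hi, hj]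
      · exact hagree (by simp [hyx, hy.1, hy.2])
    · simp only [not_exists, not_infinite] at hshared
      obtain ⟨i⟩ := ‹Infinite ι›.nonempty
      have hmeet : {j | ¬ Disjoint (s i) (s j)}.Finite := by
        refine ((s i).finite_toSet.biUnion fun x _ => hshared x).subset fun j hj => ?_
        obtain ⟨x, hxi, hxj⟩ := Finset.not_disjoint_iff.1 hj
        exact mem_biUnion hxi hxj
      obtain ⟨j, -, hj⟩ := (infinite_univ (α := ι)).exists_notMem_finite (hmeet.insert i)
      simp only [mem_insert_iff, mem_ofPred_eq, not_or, not_not] at hj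
      refine ⟨i, j, Ne.symm hj.1, fun x hx => ?_⟩
      exact absurd (Set.disjoint_iff.1 (Finset.disjoint_coe.2 hj.2) hx) (notMem_empty x)

theorem AddSubgroup.exists_sup_addMonoidHom_extending {G F : Type*} [AddCommGroup G]
    [AddCommGroup F] {H K : AddSubgroup G} (a : H →+ F) (b : K →+ F)
    (hab : ∀ x (hH : x ∈ H) (hK : x ∈ K), a ⟨x, hH⟩ = b ⟨x, hK⟩) :
    ∃ φ : ↥(H ⊔ K) →+ F, (∀ x, φ (inclusion le_sup_left x) = a x) ∧
      (∀ y, φ (inclusion le_sup_right y) = b y) := by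
  let a' : G →ₗ.[ℤ] F := ⟨H.toIntSubmodule, a.toIntLinearMap⟩
  let b' : G →ₗ.[ℤ] F := ⟨K.toIntSubmodule, b.toIntLinearMap⟩
  have hab' : ∀ (x : a'.domain) (y : b'.domain), (x : G) = y → a' x = b' y := by
    rintro ⟨x, hx⟩ ⟨y, hy⟩ (rfl : x = y)
    exact hab x hx hy
  have mem : ∀ z ∈ H ⊔ K, z ∈ (a'.sup b' hab').domain := fun z hz => by
    obtain ⟨x, hx, y, hy, rfl⟩ := mem_sup.1 hz
    exact Submodule.mem_sup.2 ⟨x, hx, y, hy, rfl⟩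
  refine ⟨AddMonoidHom.mk' (fun z => a'.sup b' hab' ⟨z, mem z z.2⟩) fun z w => ?_, fun x => ?_,
    fun y => ?_⟩
  · exact map_add (a'.sup b' hab').toFun ⟨z, mem z z.2⟩ ⟨w, mem w w.2⟩
  · exact (LinearPMap.sup_apply hab' ⟨x, x.2⟩ 0 _ (add_zero _)).trans (by simp; rfl)
  · exact (LinearPMap.sup_apply hab' 0 ⟨y, y.2⟩ _ (zero_add _)).trans (by simp; rfl)

theorem AddSubgroup.exists_sup_addMonoidHom_leftInverse {G F : Type*} [AddCommGroup G]
    [AddGroup F] {H K : AddSubgroup G} (e : F ≃+ H) (e' : F ≃+ K)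
    (h : ∀ x (hH : x ∈ H) (hK : x ∈ K), e.symm ⟨x, hH⟩ = e'.symm ⟨x, hK⟩) :
    ∃ φ : ↥(H ⊔ K) →+ F, (∀ x, φ (inclusion le_sup_left (e x)) = x) ∧
      (∀ x, φ (inclusion le_sup_right (e' x)) = x) := by
  let _ : AddCommGroup F :=
    { ‹AddGroup F› with add_comm := fun x y => e.injective <| by rw [map_add, map_add, add_comm] }
  obtain ⟨φ, hH, hK⟩ := exists_sup_addMonoidHom_extending e.symm.toAddMonoidHom
    e'.symm.toAddMonoidHom h
  exact ⟨φ, fun x => by simpa using hH (e x), fun x => by simpa using hK (e' x)⟩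

theorem exists_lt_addEquiv_symm_eq_on_inf {ι G F : Type*} [LinearOrder ι] [Infinite ι]
    [AddGroup G] [AddGroup F] [Finite F] (H : ι → AddSubgroup G) (e : ∀ i, F ≃+ H i) :
    ∃ i j, i < j ∧ ∀ x (hi : x ∈ H i) (hj : x ∈ H j), (e i).symm ⟨x, hi⟩ = (e j).symm ⟨x, hj⟩ := by
  classical
  have (i : ι) : Finite (H i) := .of_equiv F (e i)
  let s i := (H i : Set G).toFinite.toFinset
  let g i x := if h : x ∈ H i then (e i).symm ⟨x, h⟩ else 0
  have hs i : (s i).card ≤ Nat.card F := by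
    rw [← Nat.card_eq_card_finite_toFinset, Nat.card_congr (e i).toEquiv]; rfl
  have hg {i j} (h : EqOn (g i) (g j) (↑(s i) ∩ ↑(s j))) (x) (hi : x ∈ H i) (hj : x ∈ H j) :
      (e i).symm ⟨x, hi⟩ = (e j).symm ⟨x, hj⟩ := by
    simpa [g, hi, hj] using h (x := x) ⟨by simp [s, hi], by simp [s, hj]⟩
  obtain ⟨i, j, hij, hagree⟩ := exists_ne_eqOn_inter_of_card_le s hs g
  rcases hij.lt_or_gt with h | h
  · exact ⟨i, j, h, hg hagree⟩
  · exact ⟨j, i, h, hg (inter_comm _ _ ▸ hagree.symm)⟩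

theorem abelian_weak_compat_general (G : Type u) [AddCommGroup G] :
    ∀ (F : Type) (_ : AddGroup F) (_ : Finite F)
      (Fs : ∀ o : Ordinal.{u}, o < (Cardinal.aleph 1).ord → AddSubgroup G)
      (f : ∀ o ho, F ≃+ Fs o ho),
      ∃ (i j : Ordinal.{u}) (hi : i < (Cardinal.aleph 1).ord)
        (hj : j < (Cardinal.aleph 1).ord), i < j ∧
        ∃ φ : (Fs i hi ⊔ Fs j hj : AddSubgroup G) →+ F,
          (∀ x, φ (AddSubgroup.inclusion le_sup_left (f i hi x)) = x) ∧
          (∀ x, φ (AddSubgroup.inclusion le_sup_right (f j hj x)) = x) := by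
  intro F _ _ Fs f
  have : Infinite (Iio (ℵ_ 1).ord) := infinite_iff.2 <| by
    rw [mk_Iio_ordinal, card_ord, aleph0_le_lift]
    exact aleph0_le_aleph 1
  obtain ⟨i, j, hij, hagree⟩ :=
    exists_lt_addEquiv_symm_eq_on_inf (fun o : Iio (ℵ_ 1).ord => Fs o o.2) fun o => f o o.2
  exact ⟨i, j, i.2, j.2, hij, AddSubgroup.exists_sup_addMonoidHom_leftInverse _ _ hagree⟩

/-- Every infinite abelian group `G` satisfies the weak `ω₁`-compatibility condition: for
any finite additive group `F` and isomorphisms `f i : F ≃+ F i` (`i < ω₁`) onto finite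
subgroups `F i` of `G`, there exist `i < j < ω₁` and a homomorphism `φ : F i + F j → F`
with `φ ∘ f i = φ ∘ f j = id`. Hence the weak compatibility number of `G` is `ω`. -/
theorem abelian_weak_compat (G : Type u) [AddCommGroup G] [Infinite G] :
    ∀ (F : Type) (_ : AddGroup F) (_ : Finite F)
      (Fs : ∀ o : Ordinal.{u}, o < (Cardinal.aleph 1).ord → AddSubgroup G)
      (f : ∀ o ho, F ≃+ Fs o ho),
      ∃ (i j : Ordinal.{u}) (hi : i < (Cardinal.aleph 1).ord)
        (hj : j < (Cardinal.aleph 1).ord), i < j ∧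
        ∃ φ : (Fs i hi ⊔ Fs j hj : AddSubgroup G) →+ F,
          (∀ x, φ (AddSubgroup.inclusion le_sup_left (f i hi x)) = x) ∧
          (∀ x, φ (AddSubgroup.inclusion le_sup_right (f j hj x)) = x) :=
  abelian_weak_compat_general G
end
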